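/- arXiv:2507.06490 — 9 statements merged into one kernel-verified Lean document; each statement's English description precedes it below -/
import Mathlib

section
/- For every l ≥ 0, the map from F^l to F[x] given by (M_1, ..., M_l) ↦ BRW(x; M_1, ..., M_l) is injective. -/
open Polynomial

section Aux

variable {F : Type*} [Field F] (BRW : List F → Polynomial F)

theorem brw_degInfo
    (hB0 : BRW [] = 0)
    (hB1 : ∀ a : F, BRW [a] = Polynomial.C a)
    (hB2 : ∀ a b : F, BRW [a, b] = Polynomial.C a * Polynomial.X + Polynomial.C b)
    (hB3 : ∀ a b c : F, BRW [a, b, c] =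
      (Polynomial.X + Polynomial.C a) * (Polynomial.X ^ 2 + Polynomial.C b) + Polynomial.C c)
    (hBrec : ∀ l : List F, 4 ≤ l.length →
      BRW l = BRW (l.take (2 ^ Nat.log 2 l.length - 1)) *
        (Polynomial.X ^ (2 ^ Nat.log 2 l.length) +
          Polynomial.C (l.getD (2 ^ Nat.log 2 l.length - 1) 0)) +
        BRW (l.drop (2 ^ Nat.log 2 l.length))) :
    ∀ n : ℕ, ∀ l : List F, l.length = n →
      ((BRW l).degree < ((2 ^ (Nat.log 2 l.length + 1) : ℕ) : WithBot ℕ)) ∧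
      (3 ≤ l.length → (BRW l).Monic ∧
        (BRW l).natDegree = 2 ^ (Nat.log 2 l.length + 1) - 1) ∧
      (l.length ≤ 2 → (BRW l).degree < 2) := by
  intro n
  induction n using Nat.strong_induction_on with
  | _ n ih =>
    intro l hl
    rcases Nat.lt_or_ge n 4 with hn4 | hn4
    · interval_cases n
      · have hnil : l = [] := List.length_eq_zero_iff.mp hl
        subst hnil
        rw [hB0]
        refine ⟨?_, by simp, fun _ => ?_⟩ <;>
          · simp only [degree_zero]
            exact bot_lt_iff_ne_bot.mpr (by simp)
      · obtain ⟨a, rfl⟩ := List.length_eq_one_iff.mp hl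
        rw [hB1]
        have h0 : (C a : Polynomial F).degree < 2 :=
          lt_of_le_of_lt degree_C_le (by norm_num)
        refine ⟨?_, by simp, fun _ => h0⟩
        refine lt_of_le_of_lt degree_C_le ?_
        simp only [List.length_singleton, Nat.log_one_right]
        exact_mod_cast (by norm_num : (0:ℕ) < 2 ^ (0 + 1))
      · obtain ⟨a, b, rfl⟩ := List.length_eq_two.mp hl
        rw [hB2]
        have hdeg : (C a * X + C b : Polynomial F).degree ≤ 1 := by
          compute_degree
        have h2 : (C a * X + C b : Polynomial F).degree < 2 :=
          lt_of_le_of_lt hdeg (by norm_num)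
        refine ⟨?_, by simp, fun _ => h2⟩
        have hb : (2 : ℕ) ≤ 2 ^ (Nat.log 2 ([a, b] : List F).length + 1) :=
          Nat.le_self_pow (Nat.succ_ne_zero _) 2
        calc (C a * X + C b : Polynomial F).degree < 2 := h2
          _ ≤ _ := by exact_mod_cast hb
      · obtain ⟨a, b, c, rfl⟩ := List.length_eq_three.mp hl
        rw [hB3]
        have hlog : Nat.log 2 3 = 1 :=
          Nat.log_eq_of_pow_le_of_lt_pow (by norm_num) (by norm_num)
        have hmon : ((X + C a) * (X ^ 2 + C b) + C c : Polynomial F).Monic := by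
          monicity!
        have hdeg : ((X + C a) * (X ^ 2 + C b) + C c : Polynomial F).natDegree = 3 := by
          compute_degree!
        have hdeg' : ((X + C a) * (X ^ 2 + C b) + C c : Polynomial F).degree = (3 : ℕ) := by
          rw [degree_eq_natDegree hmon.ne_zero, hdeg]
        have hlen3 : ([a, b, c] : List F).length = 3 := rfl
        refine ⟨?_, fun _ => ⟨hmon, ?_⟩, by simp [hlen3]⟩
        · rw [hdeg', hlen3, hlog]
          exact_mod_cast (by norm_num : (3:ℕ) < 2 ^ (1 + 1))
        · rw [hdeg, hlen3, hlog]
          norm_num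
    · -- recursive case
      have hrec := hBrec l (by omega)
      rw [hl] at hrec ⊢
      set r := Nat.log 2 n with hr
      have hr2 : 2 ≤ r := by
        have h4 : Nat.log 2 4 = 2 := Nat.log_eq_of_pow_le_of_lt_pow (by norm_num) (by norm_num)
        calc 2 = Nat.log 2 4 := h4.symm
          _ ≤ r := by rw [hr]; exact Nat.log_mono_right hn4
      have hmn : 2 ^ r ≤ n := Nat.pow_log_le_self 2 (by omega)
      have hnm : n < 2 ^ (r + 1) := Nat.lt_pow_succ_log_self (by norm_num) n
      have hm4 : 4 ≤ 2 ^ r := by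
        calc 4 = 2 ^ 2 := by norm_num
          _ ≤ 2 ^ r := Nat.pow_le_pow_right (by norm_num) hr2
      have h2r : 2 ^ r = 2 * 2 ^ (r - 1) := by
        rw [← pow_succ']
        congr 1
        omega
      have hp1 : 1 ≤ 2 ^ (r - 1) := Nat.one_le_two_pow
      have h2r1 : 2 ^ (r + 1) = 2 * 2 ^ r := by rw [pow_succ']
      -- the take part
      have htlen : (l.take (2 ^ r - 1)).length = 2 ^ r - 1 := by
        rw [List.length_take]
        omega
      have hlogt : Nat.log 2 (2 ^ r - 1) = r - 1 := by
        apply Nat.log_eq_of_pow_le_of_lt_pow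
        · omega
        · have : r - 1 + 1 = r := by omega
          rw [this]
          omega
      have ihA := ih (2 ^ r - 1) (by omega) (l.take (2 ^ r - 1)) htlen
      obtain ⟨hAmon, hAdeg⟩ := ihA.2.1 (by omega)
      rw [htlen, hlogt] at hAdeg
      have hAdeg' : (BRW (l.take (2 ^ r - 1))).natDegree = 2 ^ r - 1 := by
        rw [hAdeg]
        have : r - 1 + 1 = r := by omega
        rw [this]
      -- the drop part
      have hdlen : (l.drop (2 ^ r)).length = n - 2 ^ r := by
        rw [List.length_drop, hl]
      have hBdeg : (BRW (l.drop (2 ^ r))).degree < ((2 ^ r : ℕ) : WithBot ℕ) := by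
        rcases Nat.eq_zero_or_pos (n - 2 ^ r) with hk0 | hk1
        · have : l.drop (2 ^ r) = [] := List.length_eq_zero_iff.mp (by omega)
          rw [this, hB0, degree_zero]
          exact_mod_cast WithBot.bot_lt_coe _
        · have ihB := (ih (n - 2 ^ r) (by omega) (l.drop (2 ^ r)) hdlen).1
          rw [hdlen] at ihB
          refine lt_of_lt_of_le ihB ?_
          have hlogk : Nat.log 2 (n - 2 ^ r) ≤ r - 1 := by
            rw [← hlogt]
            exact Nat.log_mono_right (by omega)
          have : 2 ^ (Nat.log 2 (n - 2 ^ r) + 1) ≤ 2 ^ r := by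
            calc 2 ^ (Nat.log 2 (n - 2 ^ r) + 1) ≤ 2 ^ (r - 1 + 1) :=
                  Nat.pow_le_pow_right (by norm_num) (by omega)
              _ = 2 ^ r := by congr 1; omega
          exact_mod_cast this
      -- the product
      have hXmon : (X ^ (2 ^ r) + C (l.getD (2 ^ r - 1) 0) : Polynomial F).Monic := by
        apply monic_X_pow_add
        refine lt_of_le_of_lt degree_C_le ?_
        exact_mod_cast (by omega : 0 < 2 ^ r)
      have hPmon : (BRW (l.take (2 ^ r - 1)) *
          (X ^ (2 ^ r) + C (l.getD (2 ^ r - 1) 0))).Monic := hAmon.mul hXmon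
      have hPdeg : (BRW (l.take (2 ^ r - 1)) *
          (X ^ (2 ^ r) + C (l.getD (2 ^ r - 1) 0))).natDegree = 2 ^ (r + 1) - 1 := by
        rw [hAmon.natDegree_mul hXmon, hAdeg', natDegree_X_pow_add_C]
        omega
      have hPdeg' : (BRW (l.take (2 ^ r - 1)) *
          (X ^ (2 ^ r) + C (l.getD (2 ^ r - 1) 0))).degree = ((2 ^ (r + 1) - 1 : ℕ) : WithBot ℕ) := by
        rw [degree_eq_natDegree hPmon.ne_zero, hPdeg]
      have hBP : (BRW (l.drop (2 ^ r))).degree <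
          (BRW (l.take (2 ^ r - 1)) *
            (X ^ (2 ^ r) + C (l.getD (2 ^ r - 1) 0))).degree := by
        rw [hPdeg']
        refine lt_of_lt_of_le hBdeg ?_
        exact_mod_cast (by omega : 2 ^ r ≤ 2 ^ (r + 1) - 1)
      have hmon : (BRW l).Monic := by
        rw [hrec]
        exact hPmon.add_of_left hBP
      have hdeg : (BRW l).degree = ((2 ^ (r + 1) - 1 : ℕ) : WithBot ℕ) := by
        rw [hrec, degree_add_eq_left_of_degree_lt hBP, hPdeg']
      refine ⟨?_, fun _ => ⟨hmon, ?_⟩, fun h => by omega⟩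
      · rw [hdeg]
        exact_mod_cast (by omega : 2 ^ (r + 1) - 1 < 2 ^ (r + 1))
      · exact natDegree_eq_of_degree_eq_some hdeg

theorem brw_coeffTop
    (hB0 : BRW [] = 0)
    (hB1 : ∀ a : F, BRW [a] = Polynomial.C a)
    (hB2 : ∀ a b : F, BRW [a, b] = Polynomial.C a * Polynomial.X + Polynomial.C b)
    (hB3 : ∀ a b c : F, BRW [a, b, c] =
      (Polynomial.X + Polynomial.C a) * (Polynomial.X ^ 2 + Polynomial.C b) + Polynomial.C c)
    (hBrec : ∀ l : List F, 4 ≤ l.length →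
      BRW l = BRW (l.take (2 ^ Nat.log 2 l.length - 1)) *
        (Polynomial.X ^ (2 ^ Nat.log 2 l.length) +
          Polynomial.C (l.getD (2 ^ Nat.log 2 l.length - 1) 0)) +
        BRW (l.drop (2 ^ Nat.log 2 l.length))) :
    ∀ l₁ l₂ : List F, l₁.length = l₂.length → ∀ j : ℕ, 2 ≤ j →
      2 ^ (Nat.log 2 l₁.length + 1) - 1 ≤ j →
      (BRW l₁).coeff j = (BRW l₂).coeff j := by
  intro l₁ l₂ hlen j hj2 hjD
  have h₁ := brw_degInfo BRW hB0 hB1 hB2 hB3 hBrec l₁.length l₁ rfl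
  have h₂ := brw_degInfo BRW hB0 hB1 hB2 hB3 hBrec l₂.length l₂ rfl
  rcases le_or_gt l₁.length 2 with hsmall | hbig
  · have e₁ : (BRW l₁).coeff j = 0 :=
      coeff_eq_zero_of_degree_lt (lt_of_lt_of_le (h₁.2.2 hsmall)
        (by exact_mod_cast hj2))
    have e₂ : (BRW l₂).coeff j = 0 :=
      coeff_eq_zero_of_degree_lt (lt_of_lt_of_le (h₂.2.2 (hlen ▸ hsmall))
        (by exact_mod_cast hj2))
    rw [e₁, e₂]
  · obtain ⟨m₁, d₁⟩ := h₁.2.1 hbig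
    obtain ⟨m₂, d₂⟩ := h₂.2.1 (hlen ▸ hbig)
    rw [← hlen] at d₂
    rcases eq_or_lt_of_le hjD with hj | hj
    · rw [← hj]
      have c₁ : (BRW l₁).coeff (2 ^ (Nat.log 2 l₁.length + 1) - 1) = 1 := by
        rw [← d₁]; exact m₁.coeff_natDegree
      have c₂ : (BRW l₂).coeff (2 ^ (Nat.log 2 l₁.length + 1) - 1) = 1 := by
        rw [← d₂]; exact m₂.coeff_natDegree
      rw [c₁, c₂]
    · have e₁ : (BRW l₁).coeff j = 0 := by
        apply coeff_eq_zero_of_degree_lt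
        rw [degree_eq_natDegree m₁.ne_zero, d₁]
        exact_mod_cast hj
      have e₂ : (BRW l₂).coeff j = 0 := by
        apply coeff_eq_zero_of_degree_lt
        rw [degree_eq_natDegree m₂.ne_zero, d₂]
        exact_mod_cast hj
      rw [e₁, e₂]

end Aux

/-- For every `l ≥ 0`, the map `F^l → F[x]`, `(M_1,…,M_l) ↦ BRW(x; M_1,…,M_l)` is injective.
`BRW` is characterized by its defining recurrence. -/
theorem brw_injective {F : Type*} [Field F] [Fintype F]
    (BRW : List F → Polynomial F)
    (hB0 : BRW [] = 0)
    (hB1 : ∀ a : F, BRW [a] = Polynomial.C a)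
    (hB2 : ∀ a b : F, BRW [a, b] = Polynomial.C a * Polynomial.X + Polynomial.C b)
    (hB3 : ∀ a b c : F, BRW [a, b, c] =
      (Polynomial.X + Polynomial.C a) * (Polynomial.X ^ 2 + Polynomial.C b) + Polynomial.C c)
    (hBrec : ∀ l : List F, 4 ≤ l.length →
      BRW l = BRW (l.take (2 ^ Nat.log 2 l.length - 1)) *
        (Polynomial.X ^ (2 ^ Nat.log 2 l.length) +
          Polynomial.C (l.getD (2 ^ Nat.log 2 l.length - 1) 0)) +
        BRW (l.drop (2 ^ Nat.log 2 l.length))) :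
    ∀ l₁ l₂ : List F, l₁.length = l₂.length → BRW l₁ = BRW l₂ → l₁ = l₂ := by
  suffices H : ∀ n : ℕ, ∀ l₁ l₂ : List F, l₁.length = n → l₂.length = n →
      BRW l₁ = BRW l₂ → l₁ = l₂ by
    intro l₁ l₂ hlen heq
    exact H l₁.length l₁ l₂ rfl hlen.symm heq
  intro n
  induction n using Nat.strong_induction_on with
  | _ n ih =>
  intro l₁ l₂ h₁ h₂ heq
  rcases Nat.lt_or_ge n 4 with hn4 | hn4
  · interval_cases n
    · rw [List.length_eq_zero_iff.mp h₁, List.length_eq_zero_iff.mp h₂]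
    · obtain ⟨a, rfl⟩ := List.length_eq_one_iff.mp h₁
      obtain ⟨b, rfl⟩ := List.length_eq_one_iff.mp h₂
      rw [hB1, hB1] at heq
      rw [C_inj.mp heq]
    · obtain ⟨a, b, rfl⟩ := List.length_eq_two.mp h₁
      obtain ⟨c, d, rfl⟩ := List.length_eq_two.mp h₂
      rw [hB2, hB2] at heq
      have e1 := congrArg (fun p => Polynomial.coeff p 1) heq
      have e0 := congrArg (fun p => Polynomial.coeff p 0) heq
      simp [coeff_add, coeff_C_mul, coeff_X, coeff_C] at e1 e0
      rw [e1, e0]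
    · obtain ⟨a, b, c, rfl⟩ := List.length_eq_three.mp h₁
      obtain ⟨d, e, f, rfl⟩ := List.length_eq_three.mp h₂
      rw [hB3, hB3] at heq
      have hexp : ∀ u v w : F, (X + C u) * (X ^ 2 + C v) + C w =
          X ^ 3 + C u * X ^ 2 + C v * X + C (u * v + w) := by
        intro u v w
        rw [C_add, C_mul]
        ring
      rw [hexp, hexp] at heq
      have e2 := congrArg (fun p => Polynomial.coeff p 2) heq
      have e1 := congrArg (fun p => Polynomial.coeff p 1) heq
      have e0 := congrArg (fun p => Polynomial.coeff p 0) heq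
      simp [coeff_add, coeff_C_mul, coeff_X, coeff_C, coeff_X_pow] at e2 e1 e0
      have hc : c = f := by
        have := e0
        rw [e2, e1] at this
        exact by
          have h' : d * e + c = d * e + f := this
          exact add_left_cancel h'
      rw [e2, e1, hc]
  · -- recursive case
    have hrec₁ := hBrec l₁ (by omega)
    have hrec₂ := hBrec l₂ (by omega)
    rw [h₁] at hrec₁
    rw [h₂] at hrec₂
    set r := Nat.log 2 n with hr
    have hr2 : 2 ≤ r := by
      have h4 : Nat.log 2 4 = 2 := Nat.log_eq_of_pow_le_of_lt_pow (by norm_num) (by norm_num)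
      calc 2 = Nat.log 2 4 := h4.symm
        _ ≤ r := by rw [hr]; exact Nat.log_mono_right hn4
    have hmn : 2 ^ r ≤ n := Nat.pow_log_le_self 2 (by omega)
    have hnm : n < 2 ^ (r + 1) := Nat.lt_pow_succ_log_self (by norm_num) n
    have hm4 : 4 ≤ 2 ^ r := by
      calc 4 = 2 ^ 2 := by norm_num
        _ ≤ 2 ^ r := Nat.pow_le_pow_right (by norm_num) hr2
    have h2r : 2 ^ r = 2 * 2 ^ (r - 1) := by
      rw [← pow_succ']
      congr 1
      omega
    have hp1 : 1 ≤ 2 ^ (r - 1) := Nat.one_le_two_pow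
    have h2r1 : 2 ^ (r + 1) = 2 * 2 ^ r := by rw [pow_succ']
    have hlogt : Nat.log 2 (2 ^ r - 1) = r - 1 := by
      apply Nat.log_eq_of_pow_le_of_lt_pow
      · omega
      · have hrr : r - 1 + 1 = r := by omega
        rw [hrr]
        omega
    -- lengths
    have ht₁ : (l₁.take (2 ^ r - 1)).length = 2 ^ r - 1 := by rw [List.length_take]; omega
    have ht₂ : (l₂.take (2 ^ r - 1)).length = 2 ^ r - 1 := by rw [List.length_take]; omega
    have hd₁ : (l₁.drop (2 ^ r)).length = n - 2 ^ r := by rw [List.length_drop, h₁]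
    have hd₂ : (l₂.drop (2 ^ r)).length = n - 2 ^ r := by rw [List.length_drop, h₂]
    -- A parts are monic of degree 2^r - 1
    have degInfo := brw_degInfo BRW hB0 hB1 hB2 hB3 hBrec
    obtain ⟨hA₁mon, hA₁deg⟩ := (degInfo (2 ^ r - 1) (l₁.take (2 ^ r - 1)) ht₁).2.1 (by omega)
    obtain ⟨hA₂mon, hA₂deg⟩ := (degInfo (2 ^ r - 1) (l₂.take (2 ^ r - 1)) ht₂).2.1 (by omega)
    rw [ht₁, hlogt] at hA₁deg
    rw [ht₂, hlogt] at hA₂deg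
    have hrr : r - 1 + 1 = r := by omega
    rw [hrr] at hA₁deg hA₂deg
    -- B parts have degree < 2^r
    have hBdeg : ∀ l : List F, l.length = n →
        (BRW (l.drop (2 ^ r))).degree < ((2 ^ r : ℕ) : WithBot ℕ) := by
      intro l hl
      have hd : (l.drop (2 ^ r)).length = n - 2 ^ r := by rw [List.length_drop, hl]
      rcases Nat.eq_zero_or_pos (n - 2 ^ r) with hk0 | hk1
      · have hnil : l.drop (2 ^ r) = [] := List.length_eq_zero_iff.mp (by omega)
        rw [hnil, hB0, degree_zero]
        exact_mod_cast WithBot.bot_lt_coe _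
      · have ihB := (degInfo (n - 2 ^ r) (l.drop (2 ^ r)) hd).1
        rw [hd] at ihB
        refine lt_of_lt_of_le ihB ?_
        have hlogk : Nat.log 2 (n - 2 ^ r) ≤ r - 1 := by
          rw [← hlogt]
          exact Nat.log_mono_right (by omega)
        have hle : 2 ^ (Nat.log 2 (n - 2 ^ r) + 1) ≤ 2 ^ r := by
          calc 2 ^ (Nat.log 2 (n - 2 ^ r) + 1) ≤ 2 ^ (r - 1 + 1) :=
                Nat.pow_le_pow_right (by norm_num) (by omega)
            _ = 2 ^ r := by rw [hrr]
        exact_mod_cast hle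
    have hB₁deg := hBdeg l₁ h₁
    have hB₂deg := hBdeg l₂ h₂
    -- rewrite the recursion as A * X^m + L
    rw [mul_add] at hrec₁ hrec₂
    rw [hrec₁, hrec₂] at heq
    rw [add_assoc, add_assoc] at heq
    -- low parts have degree < 2^r
    have hLdeg : ∀ (A B : Polynomial F) (a : F), A.Monic → A.natDegree = 2 ^ r - 1 →
        B.degree < ((2 ^ r : ℕ) : WithBot ℕ) →
        (A * C a + B).degree < ((2 ^ r : ℕ) : WithBot ℕ) := by
      intro A B a hmon hdeg hB
      refine lt_of_le_of_lt (degree_add_le _ _) (max_lt ?_ hB)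
      refine lt_of_le_of_lt (degree_mul_le _ _) ?_
      have h1 : A.degree = ((2 ^ r - 1 : ℕ) : WithBot ℕ) := by
        rw [degree_eq_natDegree hmon.ne_zero, hdeg]
      have h2 : (C a : Polynomial F).degree ≤ 0 := degree_C_le
      calc A.degree + (C a : Polynomial F).degree ≤ ((2 ^ r - 1 : ℕ) : WithBot ℕ) + 0 :=
            add_le_add (le_of_eq h1) h2
        _ = ((2 ^ r - 1 : ℕ) : WithBot ℕ) := by rw [add_zero]
        _ < ((2 ^ r : ℕ) : WithBot ℕ) := by exact_mod_cast (by omega : 2 ^ r - 1 < 2 ^ r)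
    have hL₁ := hLdeg _ _ (l₁.getD (2 ^ r - 1) 0) hA₁mon hA₁deg hB₁deg
    have hL₂ := hLdeg _ _ (l₂.getD (2 ^ r - 1) 0) hA₂mon hA₂deg hB₂deg
    -- A₁ = A₂
    have hAeq : BRW (l₁.take (2 ^ r - 1)) = BRW (l₂.take (2 ^ r - 1)) := by
      ext dd
      have hco := congrArg (fun p => Polynomial.coeff p (dd + 2 ^ r)) heq
      simp only [coeff_add, coeff_mul_X_pow] at hco
      have z₁ : (BRW (l₁.take (2 ^ r - 1)) * C (l₁.getD (2 ^ r - 1) 0) +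
          BRW (l₁.drop (2 ^ r))).coeff (dd + 2 ^ r) = 0 :=
        coeff_eq_zero_of_degree_lt (lt_of_lt_of_le hL₁ (by exact_mod_cast Nat.le_add_left _ _))
      have z₂ : (BRW (l₂.take (2 ^ r - 1)) * C (l₂.getD (2 ^ r - 1) 0) +
          BRW (l₂.drop (2 ^ r))).coeff (dd + 2 ^ r) = 0 :=
        coeff_eq_zero_of_degree_lt (lt_of_lt_of_le hL₂ (by exact_mod_cast Nat.le_add_left _ _))
      rw [← coeff_add, ← coeff_add] at hco
      rw [z₁, z₂] at hco
      simpa using hco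
    -- L₁ = L₂
    have hLeq : BRW (l₂.take (2 ^ r - 1)) * C (l₁.getD (2 ^ r - 1) 0) + BRW (l₁.drop (2 ^ r)) =
        BRW (l₂.take (2 ^ r - 1)) * C (l₂.getD (2 ^ r - 1) 0) + BRW (l₂.drop (2 ^ r)) := by
      rw [hAeq] at heq
      exact add_left_cancel heq
    -- B coefficients at 2^r - 1 agree
    have hBco : (BRW (l₁.drop (2 ^ r))).coeff (2 ^ r - 1) =
        (BRW (l₂.drop (2 ^ r))).coeff (2 ^ r - 1) := by
      apply brw_coeffTop BRW hB0 hB1 hB2 hB3 hBrec _ _ (by rw [hd₁, hd₂]) _ (by omega)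
      rw [hd₁]
      rcases Nat.eq_zero_or_pos (n - 2 ^ r) with hk0 | hk1
      · rw [hk0]
        simp [Nat.log_zero_right]
        omega
      · have hlogk : Nat.log 2 (n - 2 ^ r) ≤ r - 1 := by
          rw [← hlogt]
          exact Nat.log_mono_right (by omega)
        have : 2 ^ (Nat.log 2 (n - 2 ^ r) + 1) ≤ 2 ^ r := by
          calc 2 ^ (Nat.log 2 (n - 2 ^ r) + 1) ≤ 2 ^ (r - 1 + 1) :=
                Nat.pow_le_pow_right (by norm_num) (by omega)
            _ = 2 ^ r := by rw [hrr]
        omega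
    -- a₁ = a₂
    have haeq : l₁.getD (2 ^ r - 1) 0 = l₂.getD (2 ^ r - 1) 0 := by
      have hco := congrArg (fun p => Polynomial.coeff p (2 ^ r - 1)) hLeq
      simp only [coeff_add, coeff_mul_C] at hco
      have h1 : (BRW (l₂.take (2 ^ r - 1))).coeff (2 ^ r - 1) = 1 := by
        have h2 := hA₂mon.coeff_natDegree
        rwa [hA₂deg] at h2
      rw [h1, one_mul, one_mul, hBco] at hco
      exact add_right_cancel hco
    -- B₁ = B₂
    have hBeq : BRW (l₁.drop (2 ^ r)) = BRW (l₂.drop (2 ^ r)) := by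
      rw [haeq] at hLeq
      exact add_left_cancel hLeq
    -- induction
    have htake : l₁.take (2 ^ r - 1) = l₂.take (2 ^ r - 1) :=
      ih (2 ^ r - 1) (by omega) _ _ ht₁ ht₂ hAeq
    have hdrop : l₁.drop (2 ^ r) = l₂.drop (2 ^ r) :=
      ih (n - 2 ^ r) (by omega) _ _ hd₁ hd₂ hBeq
    -- reconstruct
    have hidx₁ : 2 ^ r - 1 < l₁.length := by omega
    have hidx₂ : 2 ^ r - 1 < l₂.length := by omega
    have hdec₁ : l₁ = l₁.take (2 ^ r - 1) ++ l₁[2 ^ r - 1] :: l₁.drop (2 ^ r) := by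
      have h' : 2 ^ r - 1 + 1 = 2 ^ r := by omega
      conv_lhs => rw [← List.take_append_drop (2 ^ r - 1) l₁]
      rw [List.drop_eq_getElem_cons hidx₁, h']
    have hdec₂ : l₂ = l₂.take (2 ^ r - 1) ++ l₂[2 ^ r - 1] :: l₂.drop (2 ^ r) := by
      have h' : 2 ^ r - 1 + 1 = 2 ^ r := by omega
      conv_lhs => rw [← List.take_append_drop (2 ^ r - 1) l₂]
      rw [List.drop_eq_getElem_cons hidx₂, h']
    rw [hdec₁, hdec₂, htake, hdrop]
    congr 2
    rw [← List.getD_eq_getElem l₁ 0 hidx₁, ← List.getD_eq_getElem l₂ 0 hidx₂]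
    exact haeq
end

section
/- For l ≥ 3, the degree of BRW(x; M_1, ..., M_l) equals 2^{⌊lg l⌋+1} − 1, regardless of the values M_1, ..., M_l. -/
/-!
Induction on the length `l`, keeping track of monicity. With `2 ^ r ≤ l < 2 ^ (r + 1)`, the head
`BRW(x; M_1, …, M_{2^r-1})` is monic of degree `2 ^ r - 1`, so multiplying by the monic
`x ^ (2 ^ r) + M_{2^r}` gives a monic polynomial of degree `2 ^ (r + 1) - 1`. The tail has fewer
than `2 ^ r` entries, hence degree below `2 ^ r`, and cannot cancel the leading term.
-/

open Polynomial

theorem Polynomial.Monic.mul_X_pow_add_C_add {R : Type*} [Semiring R] [Nontrivial R]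
    {p q : R[X]} (hp : p.Monic) {k : ℕ} (hk : k ≠ 0) (a : R) (hq : q.natDegree < k) :
    (p * (X ^ k + C a) + q).Monic ∧ (p * (X ^ k + C a) + q).natDegree = p.natDegree + k := by
  have hmul : (p * (X ^ k + C a)).Monic := hp.mul (monic_X_pow_add_C a hk)
  have hdeg : (p * (X ^ k + C a)).natDegree = p.natDegree + k := by
    rw [hp.natDegree_mul (monic_X_pow_add_C a hk), natDegree_X_pow_add_C]
  have hlt : q.natDegree < (p * (X ^ k + C a)).natDegree := by omega
  exact ⟨hmul.add_of_left (degree_lt_degree hlt),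
    (natDegree_add_eq_left_of_natDegree_lt hlt).trans hdeg⟩

theorem Nat.log_pow_sub_one {b r : ℕ} (hb : 1 < b) (hr : r ≠ 0) :
    Nat.log b (b ^ r - 1) = r - 1 := by
  apply Nat.log_eq_of_pow_le_of_lt_pow
  · have := Nat.pow_lt_pow_right hb (Nat.sub_lt (Nat.pos_of_ne_zero hr) one_pos)
    omega
  · rw [Nat.sub_add_cancel (Nat.one_le_iff_ne_zero.mpr hr)]
    exact Nat.sub_lt (Nat.pow_pos (by omega)) one_pos

section BRW

variable {F : Type*} [Field F] {BRW : List F → F[X]}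

theorem natDegree_brw_le_one (hB0 : BRW [] = 0) (hB1 : ∀ a : F, BRW [a] = C a)
    (hB2 : ∀ a b : F, BRW [a, b] = C a * X + C b) {l : List F} (hl : l.length ≤ 2) :
    (BRW l).natDegree ≤ 1 := by
  rcases l with _ | ⟨a, _ | ⟨b, _ | ⟨c, t⟩⟩⟩
  · simp [hB0]
  · simp [hB1]
  · rw [hB2]; exact natDegree_linear_le
  · simp at hl

theorem monic_brw_and_natDegree_eq (hB0 : BRW [] = 0) (hB1 : ∀ a : F, BRW [a] = C a)
    (hB2 : ∀ a b : F, BRW [a, b] = C a * X + C b)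
    (hB3 : ∀ a b c : F, BRW [a, b, c] = (X + C a) * (X ^ 2 + C b) + C c)
    (hBrec : ∀ l : List F, 4 ≤ l.length →
      BRW l = BRW (l.take (2 ^ Nat.log 2 l.length - 1)) *
        (X ^ (2 ^ Nat.log 2 l.length) + C (l.getD (2 ^ Nat.log 2 l.length - 1) 0)) +
        BRW (l.drop (2 ^ Nat.log 2 l.length)))
    (l : List F) (hl : 3 ≤ l.length) :
    (BRW l).Monic ∧ (BRW l).natDegree = 2 ^ (Nat.log 2 l.length + 1) - 1 := by
  induction hn : l.length using Nat.strong_induction_on generalizing l with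
  | _ n ih =>
  rcases hl.eq_or_lt with h3 | h4
  · obtain rfl : n = 3 := hn ▸ h3.symm
    obtain ⟨a, b, c, rfl⟩ : ∃ a b c : F, l = [a, b, c] := by
      match l, hn with
      | [a, b, c], _ => exact ⟨a, b, c, rfl⟩
    have hlog : Nat.log 2 3 = 1 := Nat.log_eq_of_pow_le_of_lt_pow (by norm_num) (by norm_num)
    rw [hB3, hlog]
    obtain ⟨hmonic, hdeg⟩ :=
      (monic_X_add_C a).mul_X_pow_add_C_add two_ne_zero b (q := C c) (by simp)
    exact ⟨hmonic, by rw [hdeg, natDegree_X_add_C]; rfl⟩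
  · set r := Nat.log 2 n with hr
    have hr2 : 2 ≤ r := (Nat.le_log_iff_pow_le one_lt_two (by omega)).mpr (by omega)
    have hpow_le : 2 ^ r ≤ n := Nat.pow_log_le_self 2 (by omega)
    have hlt_pow : n < 2 ^ (r + 1) := Nat.lt_pow_succ_log_self one_lt_two n
    have hpow_succ : 2 ^ (r + 1) = 2 ^ r + 2 ^ r := by rw [pow_succ]; omega
    have hpow_ge : 4 ≤ 2 ^ r := by
      calc 4 = 2 ^ 2 := rfl
        _ ≤ 2 ^ r := Nat.pow_le_pow_right two_pos hr2
    have head_len : (l.take (2 ^ r - 1)).length = 2 ^ r - 1 := by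
      rw [List.length_take]; omega
    obtain ⟨head_monic, head_deg⟩ := ih _ (by omega) _ (by omega) head_len
    rw [Nat.log_pow_sub_one one_lt_two (by omega), Nat.sub_add_cancel (by omega)]
      at head_deg
    have tail_deg : (BRW (l.drop (2 ^ r))).natDegree < 2 ^ r := by
      have tail_len : (l.drop (2 ^ r)).length = n - 2 ^ r := by rw [List.length_drop, hn]
      by_cases h3 : 3 ≤ n - 2 ^ r
      · have hlog : Nat.log 2 (n - 2 ^ r) + 1 ≤ r :=
          Nat.log_lt_of_lt_pow (by omega) (by omega)
        have : 2 ^ (Nat.log 2 (n - 2 ^ r) + 1) ≤ 2 ^ r := Nat.pow_le_pow_right two_pos hlog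
        rw [(ih _ (by omega) _ (by omega) tail_len).2]
        have := Nat.one_le_two_pow (n := Nat.log 2 (n - 2 ^ r) + 1)
        omega
      · have := natDegree_brw_le_one hB0 hB1 hB2 (l := l.drop (2 ^ r)) (by omega)
        omega
    rw [hBrec l (by omega), hn, ← hr]
    obtain ⟨hmonic, hdeg⟩ := head_monic.mul_X_pow_add_C_add (by positivity)
      (l.getD (2 ^ r - 1) 0) tail_deg
    exact ⟨hmonic, by rw [hdeg, head_deg]; omega⟩

end BRW

theorem brw_degree_general {F : Type*} [Field F]
    (BRW : List F → Polynomial F)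
    (hB0 : BRW [] = 0)
    (hB1 : ∀ a : F, BRW [a] = Polynomial.C a)
    (hB2 : ∀ a b : F, BRW [a, b] = Polynomial.C a * Polynomial.X + Polynomial.C b)
    (hB3 : ∀ a b c : F, BRW [a, b, c] =
      (Polynomial.X + Polynomial.C a) * (Polynomial.X ^ 2 + Polynomial.C b) + Polynomial.C c)
    (hBrec : ∀ l : List F, 4 ≤ l.length →
      BRW l = BRW (l.take (2 ^ Nat.log 2 l.length - 1)) *
        (Polynomial.X ^ (2 ^ Nat.log 2 l.length) +
          Polynomial.C (l.getD (2 ^ Nat.log 2 l.length - 1) 0)) +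
        BRW (l.drop (2 ^ Nat.log 2 l.length))) :
    ∀ l : List F, 3 ≤ l.length →
      (BRW l).natDegree = 2 ^ (Nat.log 2 l.length + 1) - 1 := fun l hl =>
  (monic_brw_and_natDegree_eq hB0 hB1 hB2 hB3 hBrec l hl).2

/-- For `l ≥ 3`, `deg BRW(x; M_1,…,M_l) = 2^(⌊lg l⌋+1) − 1`, regardless of the `M_i`. -/
theorem brw_degree {F : Type*} [Field F] [Fintype F]
    (BRW : List F → Polynomial F)
    (hB0 : BRW [] = 0)
    (hB1 : ∀ a : F, BRW [a] = Polynomial.C a)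
    (hB2 : ∀ a b : F, BRW [a, b] = Polynomial.C a * Polynomial.X + Polynomial.C b)
    (hB3 : ∀ a b c : F, BRW [a, b, c] =
      (Polynomial.X + Polynomial.C a) * (Polynomial.X ^ 2 + Polynomial.C b) + Polynomial.C c)
    (hBrec : ∀ l : List F, 4 ≤ l.length →
      BRW l = BRW (l.take (2 ^ Nat.log 2 l.length - 1)) *
        (Polynomial.X ^ (2 ^ Nat.log 2 l.length) +
          Polynomial.C (l.getD (2 ^ Nat.log 2 l.length - 1) 0)) +
        BRW (l.drop (2 ^ Nat.log 2 l.length))) :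
    ∀ l : List F, 3 ≤ l.length →
      (BRW l).natDegree = 2 ^ (Nat.log 2 l.length + 1) - 1 :=
  brw_degree_general BRW hB0 hB1 hB2 hB3 hBrec
end

section
/- For l ≥ 3, the degree of BRW(x; M_1, ..., M_l) satisfies deg ≤ 2l − 1, with equality if and only if l is a power of 2; and deg = l if and only if l = 2^a − 1 for some integer a ≥ 2. -/
open Polynomial

/-- For `l ≥ 3`: `deg BRW ≤ 2l − 1`, with equality iff `l` is a power of `2`;
and `deg BRW = l` iff `l = 2^a − 1` for some `a ≥ 2`. -/
theorem brw_degree_bounds {F : Type*} [Field F] [Fintype F]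
    (BRW : List F → Polynomial F)
    (hB0 : BRW [] = 0)
    (hB1 : ∀ a : F, BRW [a] = Polynomial.C a)
    (hB2 : ∀ a b : F, BRW [a, b] = Polynomial.C a * Polynomial.X + Polynomial.C b)
    (hB3 : ∀ a b c : F, BRW [a, b, c] =
      (Polynomial.X + Polynomial.C a) * (Polynomial.X ^ 2 + Polynomial.C b) + Polynomial.C c)
    (hBrec : ∀ l : List F, 4 ≤ l.length →
      BRW l = BRW (l.take (2 ^ Nat.log 2 l.length - 1)) *
        (Polynomial.X ^ (2 ^ Nat.log 2 l.length) +
          Polynomial.C (l.getD (2 ^ Nat.log 2 l.length - 1) 0)) +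
        BRW (l.drop (2 ^ Nat.log 2 l.length))) :
    ∀ l : List F, 3 ≤ l.length →
      (BRW l).natDegree ≤ 2 * l.length - 1 ∧
      ((BRW l).natDegree = 2 * l.length - 1 ↔ ∃ a : ℕ, l.length = 2 ^ a) ∧
      ((BRW l).natDegree = l.length ↔ ∃ a : ℕ, 2 ≤ a ∧ l.length = 2 ^ a - 1) := by
  have key : ∀ n : ℕ, ∀ l : List F, l.length = n → 3 ≤ n →
      (BRW l).Monic ∧ (BRW l).natDegree = 2 ^ (Nat.log 2 n + 1) - 1 := by
    intro n
    induction n using Nat.strong_induction_on with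
    | _ n ih =>
      intro l hl hn
      rcases eq_or_lt_of_le hn with h3 | h4
      · -- n = 3
        obtain ⟨a, b, c, rfl⟩ := List.length_eq_three.mp (hl.trans h3.symm)
        rw [hB3]
        have hlog : Nat.log 2 3 = 1 := Nat.log_eq_of_pow_le_of_lt_pow (by norm_num) (by norm_num)
        subst h3
        rw [hlog]
        constructor
        · monicity!
        · compute_degree!
      · -- n ≥ 4
        set r := Nat.log 2 n with hr
        have h2r : 2 ^ r ≤ n := Nat.pow_log_le_self 2 (by omega)
        have h2r' : n < 2 ^ (r + 1) := Nat.lt_pow_succ_log_self (by norm_num) n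
        have hr2 : 2 ≤ r := by
          by_contra h
          push_neg at h
          have : 2 ^ (r + 1) ≤ 2 ^ 2 := Nat.pow_le_pow_right (by norm_num) (by omega)
          norm_num at this
          omega
        have h4r : 4 ≤ 2 ^ r := by
          calc (4 : ℕ) = 2 ^ 2 := by norm_num
          _ ≤ 2 ^ r := Nat.pow_le_pow_right (by norm_num) hr2
        have hsucc : 2 ^ (r + 1) = 2 * 2 ^ r := by rw [pow_succ]; ring
        have hrec := hBrec l (by omega)
        rw [hl] at hrec
        -- take part
        have htakelen : (l.take (2 ^ r - 1)).length = 2 ^ r - 1 := by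
          rw [List.length_take, hl]; omega
        have hpred : 2 ^ (r - 1 + 1) = 2 ^ r := by congr 1; omega
        have hpred' : 2 ^ (r - 1 + 1) = 2 * 2 ^ (r - 1) := by rw [pow_succ]; ring
        have h1r : 1 ≤ 2 ^ (r - 1) := Nat.one_le_two_pow
        have hlogtake : Nat.log 2 (2 ^ r - 1) = r - 1 :=
          Nat.log_eq_of_pow_le_of_lt_pow (by omega) (by omega)
        obtain ⟨htm, htd⟩ := ih (2 ^ r - 1) (by omega) _ htakelen (by omega)
        rw [hlogtake] at htd
        -- the product
        have hXm : (X ^ (2 ^ r) + C (l.getD (2 ^ r - 1) 0)).Monic :=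
          monic_X_pow_add_C _ (by positivity)
        have hpm : (BRW (l.take (2 ^ r - 1)) *
            (X ^ (2 ^ r) + C (l.getD (2 ^ r - 1) 0))).Monic := htm.mul hXm
        have hpd : (BRW (l.take (2 ^ r - 1)) *
            (X ^ (2 ^ r) + C (l.getD (2 ^ r - 1) 0))).natDegree = 2 ^ (r + 1) - 1 := by
          rw [htm.natDegree_mul hXm, htd, natDegree_X_pow_add_C]
          omega
        -- the tail
        have hdroplen : (l.drop (2 ^ r)).length = n - 2 ^ r := by
          rw [List.length_drop, hl]
        have htail : (BRW (l.drop (2 ^ r))).natDegree < 2 ^ (r + 1) - 1 := by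
          set m := n - 2 ^ r with hm
          have hm2 : m < 2 ^ r := by omega
          rcases Nat.lt_or_ge m 3 with hm3 | hm3
          · interval_cases m
            · rw [List.length_eq_zero_iff.mp hdroplen, hB0, natDegree_zero]
              omega
            · obtain ⟨a, ha⟩ := List.length_eq_one_iff.mp hdroplen
              rw [ha, hB1, natDegree_C]; omega
            · obtain ⟨a, b, ha⟩ := List.length_eq_two.mp hdroplen
              rw [ha, hB2]
              have : (C a * X + C b).natDegree ≤ 1 := by compute_degree
              omega
          · obtain ⟨-, hd⟩ := ih m (by omega) _ hdroplen hm3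
            rw [hd]
            have hlm : Nat.log 2 m < r := Nat.log_lt_of_lt_pow (by omega) hm2
            have : 2 ^ (Nat.log 2 m + 1) ≤ 2 ^ r :=
              Nat.pow_le_pow_right (by norm_num) (by omega)
            omega
        -- combine
        have hlt : (BRW (l.drop (2 ^ r))).degree <
            (BRW (l.take (2 ^ r - 1)) *
              (X ^ (2 ^ r) + C (l.getD (2 ^ r - 1) 0))).degree := by
          calc (BRW (l.drop (2 ^ r))).degree ≤ ((BRW (l.drop (2 ^ r))).natDegree : WithBot ℕ) :=
                degree_le_natDegree
          _ < ((BRW (l.take (2 ^ r - 1)) *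
              (X ^ (2 ^ r) + C (l.getD (2 ^ r - 1) 0))).natDegree : WithBot ℕ) := by
                exact_mod_cast hpd ▸ htail
          _ = _ := (degree_eq_natDegree hpm.ne_zero).symm
        rw [hrec]
        refine ⟨hpm.add_of_left hlt, ?_⟩
        rw [natDegree_eq_of_degree_eq (degree_add_eq_left_of_degree_lt hlt), hpd]
  intro l hl
  obtain ⟨-, hdeg⟩ := key l.length l rfl hl
  have h2r : 2 ^ Nat.log 2 l.length ≤ l.length := Nat.pow_log_le_self 2 (by omega)
  have h2r' : l.length < 2 ^ (Nat.log 2 l.length + 1) :=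
    Nat.lt_pow_succ_log_self (by norm_num) _
  have hsucc : 2 ^ (Nat.log 2 l.length + 1) = 2 * 2 ^ Nat.log 2 l.length := by
    rw [pow_succ]; ring
  have hr1 : 1 ≤ Nat.log 2 l.length := by
    by_contra h
    push_neg at h
    have : 2 ^ (Nat.log 2 l.length + 1) ≤ 2 ^ 1 :=
      Nat.pow_le_pow_right (by norm_num) (by omega)
    norm_num at this
    omega
  refine ⟨by omega, ⟨?_, ?_⟩, ⟨?_, ?_⟩⟩
  · intro h
    rw [hdeg] at h
    exact ⟨Nat.log 2 l.length, by omega⟩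
  · rintro ⟨a, ha⟩
    have hla : Nat.log 2 l.length = a := by rw [ha]; exact Nat.log_pow (by norm_num) a
    rw [hdeg, hla]
    have h1 : 2 ^ (a + 1) = 2 * 2 ^ a := by rw [pow_succ]; ring
    have h2 : 1 ≤ 2 ^ a := Nat.one_le_two_pow
    omega
  · intro h
    rw [hdeg] at h
    exact ⟨Nat.log 2 l.length + 1, by omega, by omega⟩
  · rintro ⟨a, ha2, ha⟩
    have hpa : 2 ^ (a - 1 + 1) = 2 ^ a := by congr 1; omega
    have hpa' : 2 ^ (a - 1 + 1) = 2 * 2 ^ (a - 1) := by rw [pow_succ]; ring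
    have h1a : 1 ≤ 2 ^ (a - 1) := Nat.one_le_two_pow
    have hla : Nat.log 2 l.length = a - 1 := by
      rw [ha]; exact Nat.log_eq_of_pow_le_of_lt_pow (by omega) (by omega)
    rw [hdeg, hla]
    omega
end

section
/- Let p = 2^m − δ be a prime and μ a positive integer with μ < m and δ < 2^μ − 1. Let α ∈ Z_{2^μ}, and let P(x), P′(x) be distinct polynomials in F_p[x] with P(0) = P′(0) = 0. Then the number of distinct τ ∈ F_p such that ((P(τ) mod p) mod 2^μ) − ((P′(τ) mod p) mod 2^μ) ≡ α (mod 2^μ) is at most 2^{m−μ+1} · deg(P(x) − P′(x)). -/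
/-!
Put `Q = P - P'`. Since the representatives of `P(τ)` and `P'(τ)` lie in `[0, p)`, the
representative of `Q(τ)` is their difference, possibly plus `p`; so on every solution `τ` the value
`Q(τ)` lies in `S = {v : v mod 2^μ ∈ {α, α + p}}`. As `p ≤ 2^m`, each residue class mod `2^μ`
meets `[0, p)` in at most `2^(m-μ)` points, so `|S| ≤ 2^(m-μ+1)`. Finally `Q` is nonconstant
(it is nonzero with zero constant term), so it takes each value at most `deg Q` times.
-/

open Finset Polynomial

namespace ZMod

theorem val_sub_add_val_eq_or {n : ℕ} [NeZero n] (a b : ZMod n) :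
    (a - b).val + b.val = a.val ∨ (a - b).val + b.val = a.val + n := by
  by_cases h : (a - b).val + b.val < n
  · left
    rw [← val_add_of_lt h, sub_add_cancel]
  · right
    have hsum := val_add_of_le (not_lt.mp h)
    rw [sub_add_cancel] at hsum
    omega

theorem natCast_val_sub_eq_or {R : Type*} [AddCommGroupWithOne R] {n : ℕ} [NeZero n]
    (a b : ZMod n) :
    ((a - b).val : R) = a.val - b.val ∨ ((a - b).val : R) = a.val - b.val + n := by
  rcases val_sub_add_val_eq_or a b with h | h
  · left
    rw [eq_sub_iff_add_eq, ← Nat.cast_add, h]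
  · right
    rw [sub_add_eq_add_sub, eq_sub_iff_add_eq, ← Nat.cast_add, h, Nat.cast_add]

theorem card_filter_natCast_val_eq_le {n d k : ℕ} [NeZero n] (hn : n ≤ d * k) (γ : ZMod d) :
    #{v : ZMod n | (v.val : ZMod d) = γ} ≤ k := by
  refine (card_le_card_of_injOn (t := range k) (fun v : ZMod n => v.val / d)
    (fun v _ => mem_range.mpr (Nat.div_lt_of_lt_mul ((val_lt v).trans_le hn)))
    (fun v hv w hw (hdiv : v.val / d = w.val / d) => by
      have hmod : v.val % d = w.val % d :=
        (natCast_eq_natCast_iff' _ _ _).mp ((mem_filter.mp hv).2.trans (mem_filter.mp hw).2.symm)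
      apply val_injective
      rw [← Nat.div_add_mod v.val d, ← Nat.div_add_mod w.val d, hdiv, hmod]))
    |>.trans_eq (card_range k)

end ZMod

namespace Polynomial

theorem degree_pos_of_ne_zero_of_coeff_zero_eq_zero {R : Type*} [Semiring R] {Q : R[X]}
    (hQ : Q ≠ 0) (hQ0 : Q.coeff 0 = 0) : 0 < Q.degree := by
  by_contra! h
  exact hQ (by rw [eq_C_of_degree_le_zero h, hQ0, C_0])

theorem card_le_natDegree_mul_card_of_eval_mem {R : Type*} [CommRing R] [IsDomain R]
    [DecidableEq R] {Q : R[X]} (hQ : 0 < Q.degree) {s t : Finset R}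
    (hst : ∀ x ∈ s, Q.eval x ∈ t) : #s ≤ Q.natDegree * #t :=
  card_le_mul_card_image_of_maps_to hst _ fun a _ =>
    calc #{x ∈ s | Q.eval x = a}
        ≤ #(Q - C a).roots.toFinset :=
          card_le_card fun _ hx =>
            Multiset.mem_toFinset.mpr ((mem_roots_sub_C hQ).mpr (mem_filter.mp hx).2)
      _ ≤ Multiset.card (Q - C a).roots := Multiset.toFinset_card_le _
      _ ≤ Q.natDegree := card_roots_sub_C' hQ

end Polynomial

theorem count_differential_solutions_general (m δ μ p : ℕ) [NeZero p] (hp : p.Prime)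
    (hpm : p = 2 ^ m - δ)
    (α : ZMod (2 ^ μ)) (P P' : Polynomial (ZMod p)) (hPP' : P ≠ P')
    (hP0 : P.coeff 0 = 0) (hP'0 : P'.coeff 0 = 0) :
    (Finset.univ.filter fun τ : ZMod p =>
        (((P.eval τ).val : ZMod (2 ^ μ)) - ((P'.eval τ).val : ZMod (2 ^ μ)) = α)).card
      ≤ 2 ^ (m - μ + 1) * (P - P').natDegree := by
  classical
  have : Fact p.Prime := ⟨hp⟩
  have hQ : 0 < (P - P').degree :=
    degree_pos_of_ne_zero_of_coeff_zero_eq_zero (sub_ne_zero.mpr hPP') (by simp [hP0, hP'0])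
  have hp_le : p ≤ 2 ^ μ * 2 ^ (m - μ) := by
    rw [← pow_add]
    exact hpm ▸ (Nat.sub_le _ _).trans (Nat.pow_le_pow_right two_pos (by omega))
  have hS : #{v : ZMod p | (v.val : ZMod (2 ^ μ)) = α ∨ (v.val : ZMod (2 ^ μ)) = α + p}
      ≤ 2 ^ (m - μ + 1) := by
    rw [filter_or, pow_succ, mul_two]
    exact (card_union_le _ _).trans (add_le_add (ZMod.card_filter_natCast_val_eq_le hp_le _)
      (ZMod.card_filter_natCast_val_eq_le hp_le _))
  refine (card_le_natDegree_mul_card_of_eval_mem hQ fun τ hτ => ?_).trans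
    ((Nat.mul_le_mul_left _ hS).trans_eq (mul_comm _ _))
  rw [mem_filter] at hτ
  rw [mem_filter, eval_sub, ← hτ.2]
  exact ⟨mem_univ _, ZMod.natCast_val_sub_eq_or _ _⟩

/-- Lemma (based on Lemma 4.1 of BNS2025): with `p = 2^m − δ` prime, `μ < m`, `δ < 2^μ − 1`,
for distinct polynomials `P, P'` over `F_p` with zero constant term and any `α ∈ Z_{2^μ}`,
the number of `τ ∈ F_p` with `((P(τ) mod p) mod 2^μ) − ((P'(τ) mod p) mod 2^μ) = α` in `Z_{2^μ}`
is at most `2^(m−μ+1) · deg(P − P')`. -/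
theorem count_differential_solutions (m δ μ p : ℕ) [NeZero p] (hp : p.Prime)
    (hpm : p = 2 ^ m - δ) (hμ0 : 0 < μ) (hμm : μ < m) (hδ : δ < 2 ^ μ - 1)
    (α : ZMod (2 ^ μ)) (P P' : Polynomial (ZMod p)) (hPP' : P ≠ P')
    (hP0 : P.coeff 0 = 0) (hP'0 : P'.coeff 0 = 0) :
    (Finset.univ.filter fun τ : ZMod p =>
        (((P.eval τ).val : ZMod (2 ^ μ)) - ((P'.eval τ).val : ZMod (2 ^ μ)) = α)).card
      ≤ 2 ^ (m - μ + 1) * (P - P').natDegree :=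
  count_differential_solutions_general m δ μ p hp hpm α P P' hPP' hP0 hP'0
end

section
/- Let p = 2^m − δ be a prime and μ, k positive integers with μ < m and δ < 2^μ − 1. Let α ∈ Z_{2^μ}, and let P(x), P′(x) be distinct polynomials in F_p[x] with P(0) = P′(0) = 0. If τ is chosen uniformly at random from the set of k-bit strings (viewed as the subset {0,...,2^k−1} of F_p, assuming 2^k ≤ p), then the probability that ((P(τ) mod p) mod 2^μ) − ((P′(τ) mod p) mod 2^μ) ≡ α (mod 2^μ) is at most 2^{m−k−μ+1} · deg(P(x) − P′(x)). -/
/-!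
In `F_p` the representative of `P(τ) - P'(τ)` is `P(τ).val - P'(τ).val` or that plus `p`, so the
event forces `(P - P')(τ)` into the set of `z` with `z.val ≡ α` or `z.val ≡ α + p (mod 2^μ)`;
as `p ≤ 2^m`, that set has at most `2 · 2^(m-μ)` elements. Since `P - P'` is nonzero and vanishes
at `0`, it is nonconstant, so it takes each value at most `deg(P - P')` times on the `2^k`
distinct points `τ`.
-/

open Polynomial Finset

theorem ZMod.natCast_val_sub {n : ℕ} [NeZero n] {R : Type*} [AddCommGroupWithOne R]
    (a b : ZMod n) :
    ((a - b).val : R) = a.val - b.val ∨ ((a - b).val : R) = a.val - b.val + n := by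
  rcases lt_or_ge ((a - b).val + b.val) n with h | h
  · have h' := ZMod.val_add_of_lt h
    rw [sub_add_cancel] at h'
    left
    rw [eq_sub_iff_add_eq, ← Nat.cast_add, ← h']
  · have h' := ZMod.val_add_val_of_le h
    rw [sub_add_cancel] at h'
    right
    rw [sub_add_eq_add_sub, eq_sub_iff_add_eq, ← Nat.cast_add, h', Nat.cast_add]

theorem ZMod.card_filter_natCast_val_eq_le_s5 {n q r : ℕ} [NeZero n] (hn : n ≤ q * r)
    (c : ZMod q) : #{z : ZMod n | (z.val : ZMod q) = c} ≤ r := by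
  have hc : ∀ z ∈ ({z : ZMod n | (z.val : ZMod q) = c} : Finset _), z.val % q = c.val := by
    intro z hz
    rw [← ZMod.val_natCast, (mem_filter.mp hz).2]
  refine (card_le_card_of_injOn (t := range r) (fun z : ZMod n => z.val / q)
    (fun z _ => mem_range.mpr (Nat.div_lt_of_lt_mul ((ZMod.val_lt z).trans_le hn)))
    (fun z hz w hw hzw => ZMod.val_injective n ?_)).trans (card_range r).le
  rw [← Nat.div_add_mod z.val q, ← Nat.div_add_mod w.val q, hc z hz, hc w hw]
  exact congrArg (q * · + c.val) hzw

theorem Polynomial.natDegree_ne_zero_of_coeff_zero_eq_zero {R : Type*} [Semiring R] {Q : R[X]}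
    (hQ : Q ≠ 0) (h0 : Q.coeff 0 = 0) : Q.natDegree ≠ 0 := fun h =>
  hQ <| by rw [eq_C_of_natDegree_eq_zero h, h0, C_0]

theorem Polynomial.card_filter_range_eval_natCast_eq_le {p N : ℕ} [Fact p.Prime]
    {Q : (ZMod p)[X]} (hQ : Q.natDegree ≠ 0) (hN : N ≤ p) (z : ZMod p) :
    #{t ∈ range N | Q.eval ((t : ℕ) : ZMod p) = z} ≤ Q.natDegree := by
  have hQz : Q - C z ≠ 0 := fun h => hQ <| by
    rw [← natDegree_sub_C (a := z), h, natDegree_zero]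
  calc #{t ∈ range N | Q.eval ((t : ℕ) : ZMod p) = z}
      ≤ #(Q - C z).roots.toFinset := card_le_card_of_injOn (Nat.cast : ℕ → ZMod p)
        (fun t ht => by
          rw [mem_coe, mem_filter] at ht
          simp [mem_roots hQz, ht.2])
        (fun t ht s hs hts => by
          rw [mem_coe, mem_filter, mem_range] at ht hs
          simpa [ZMod.val_natCast_of_lt (ht.1.trans_le hN),
            ZMod.val_natCast_of_lt (hs.1.trans_le hN)] using congrArg ZMod.val hts)
    _ ≤ Multiset.card (Q - C z).roots := Multiset.toFinset_card_le _
    _ ≤ (Q - C z).natDegree := card_roots' _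
    _ = Q.natDegree := natDegree_sub_C

theorem card_filter_range_natCast_val_sub_eval_eq_le {p q r N : ℕ} [Fact p.Prime]
    {P P' : (ZMod p)[X]} (hPP' : (P - P').natDegree ≠ 0) (hN : N ≤ p) (hp : p ≤ q * r)
    (α : ZMod q) :
    #{t ∈ range N | ((P.eval ((t : ℕ) : ZMod p)).val : ZMod q) -
        (P'.eval ((t : ℕ) : ZMod p)).val = α} ≤ (P - P').natDegree * (2 * r) := by
  set S : Finset (ZMod p) := {z | (z.val : ZMod q) = α ∨ (z.val : ZMod q) = α + p} with hS_def
  have hS : #S ≤ 2 * r := by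
    calc #S ≤ #{z : ZMod p | (z.val : ZMod q) = α} +
          #{z : ZMod p | (z.val : ZMod q) = α + p} := by
          rw [hS_def, filter_or]
          exact card_union_le _ _
      _ ≤ r + r := add_le_add (ZMod.card_filter_natCast_val_eq_le_s5 hp _)
          (ZMod.card_filter_natCast_val_eq_le_s5 hp _)
      _ = 2 * r := (two_mul r).symm
  refine (card_le_mul_card_image_of_maps_to (f := fun t : ℕ => (P - P').eval (t : ZMod p))
    (t := S) ?_ _ fun z _ => ?_).trans (Nat.mul_le_mul_left _ hS)
  · intro t ht
    rw [mem_filter] at ht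
    rw [mem_filter, eval_sub]
    refine ⟨mem_univ _, ?_⟩
    rcases ZMod.natCast_val_sub (R := ZMod q) (P.eval (t : ZMod p)) (P'.eval (t : ZMod p))
      with h | h
    · exact .inl (h.trans ht.2)
    · exact .inr (h.trans (by rw [ht.2]))
  · exact (card_le_card (filter_subset_filter _ (filter_subset _ _))).trans
      (card_filter_range_eval_natCast_eq_le hPP' hN z)

theorem prob_differential_bound_general (m δ μ k p : ℕ) (hp : p.Prime)
    (hpm : p = 2 ^ m - δ) (hμm : μ < m) (hkp : 2 ^ k ≤ p)
    (α : ZMod (2 ^ μ)) (P P' : Polynomial (ZMod p)) (hPP' : P ≠ P')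
    (hP0 : P.coeff 0 = 0) (hP'0 : P'.coeff 0 = 0) :
    (((Finset.range (2 ^ k)).filter fun t : ℕ =>
        (((P.eval (t : ZMod p)).val : ZMod (2 ^ μ)) -
          ((P'.eval (t : ZMod p)).val : ZMod (2 ^ μ)) = α)).card : ℝ) / (2 ^ k : ℝ)
      ≤ (2 : ℝ) ^ ((m : ℤ) - k - μ + 1) * ((P - P').natDegree : ℝ) := by
  have : Fact p.Prime := ⟨hp⟩
  have hdeg : (P - P').natDegree ≠ 0 := natDegree_ne_zero_of_coeff_zero_eq_zero
    (sub_ne_zero.mpr hPP') (by rw [coeff_sub, hP0, hP'0, sub_zero])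
  have hp2m : p ≤ 2 ^ μ * 2 ^ (m - μ) := by
    rw [← pow_add, Nat.add_sub_cancel' hμm.le, hpm]
    exact Nat.sub_le _ _
  have hcount := card_filter_range_natCast_val_sub_eval_eq_le hdeg hkp hp2m α
  have hpow : (2 : ℝ) ^ ((m : ℤ) - k - μ + 1) = 2 * 2 ^ (m - μ) / 2 ^ k := by
    rw [show (m : ℤ) - k - μ + 1 = ((m - μ + 1 : ℕ) : ℤ) - k by omega, zpow_sub₀ two_ne_zero,
      zpow_natCast, zpow_natCast, pow_succ']
  rw [hpow, div_mul_eq_mul_div, mul_comm]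
  gcongr
  exact_mod_cast hcount

/-- With `p = 2^m − δ` prime, `μ < m`, `δ < 2^μ − 1`, and `2^k ≤ p`: for distinct polynomials
`P, P'` over `F_p` with zero constant term and `α ∈ Z_{2^μ}`, the probability over a uniform
random `k`-bit `τ` that `((P(τ) mod p) mod 2^μ) − ((P'(τ) mod p) mod 2^μ) = α` is at most
`2^(m−k−μ+1) · deg(P − P')`. -/
theorem prob_differential_bound (m δ μ k p : ℕ) [NeZero p] (hp : p.Prime)
    (hpm : p = 2 ^ m - δ) (hμ0 : 0 < μ) (hμm : μ < m) (hδ : δ < 2 ^ μ - 1)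
    (hk : 0 < k) (hkp : 2 ^ k ≤ p)
    (α : ZMod (2 ^ μ)) (P P' : Polynomial (ZMod p)) (hPP' : P ≠ P')
    (hP0 : P.coeff 0 = 0) (hP'0 : P'.coeff 0 = 0) :
    (((Finset.range (2 ^ k)).filter fun t : ℕ =>
        (((P.eval (t : ZMod p)).val : ZMod (2 ^ μ)) -
          ((P'.eval (t : ZMod p)).val : ZMod (2 ^ μ)) = α)).card : ℝ) / (2 ^ k : ℝ)
      ≤ (2 : ℝ) ^ ((m : ℤ) - k - μ + 1) * ((P - P').natDegree : ℝ) :=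
  prob_differential_bound_general m δ μ k p hp hpm hμm hkp α P P' hPP' hP0 hP'0
end

section
/- The map X ↦ pad2(format(X)) from binary strings of length less than 2^{m−1} to sequences of elements of F_p is injective. -/
def blockVal (b : List Bool) : ℕ :=
  b.foldl (fun acc bit => 2 * acc + bit.toNat) 0

def pad2format (p n : ℕ) (X : List Bool) : List (ZMod p) :=
  ((List.range ((X.length + n - 1) / n)).map
    (fun i => ((blockVal ((X.drop (n * i)).take n) : ℕ) : ZMod p))) ++ [(X.length : ZMod p)]

lemma blockVal_foldl (l : List Bool) (a : ℕ) :
    l.foldl (fun acc bit => 2 * acc + bit.toNat) a = a * 2 ^ l.length + blockVal l := by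
  induction l generalizing a with
  | nil => simp only [List.foldl_nil, blockVal, List.length_nil, pow_zero]; omega
  | cons x t ih =>
    simp only [List.foldl_cons, List.length_cons, blockVal, Nat.mul_zero, Nat.zero_add]
    rw [ih, ih]
    ring

lemma blockVal_cons (x : Bool) (l : List Bool) :
    blockVal (x :: l) = x.toNat * 2 ^ l.length + blockVal l := by
  simp only [blockVal, List.foldl_cons, Nat.mul_zero, Nat.zero_add]
  rw [blockVal_foldl]
  rfl

lemma blockVal_lt (l : List Bool) : blockVal l < 2 ^ l.length := by
  induction l with
  | nil => simp only [blockVal, List.foldl_nil, List.length_nil, pow_zero]; omega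
  | cons x t ih =>
    rw [blockVal_cons]
    cases x <;> simp only [Bool.toNat_false, Bool.toNat_true, List.length_cons, pow_succ] <;> omega

lemma blockVal_inj : ∀ l l' : List Bool, l.length = l'.length →
    blockVal l = blockVal l' → l = l' := by
  intro l
  induction l with
  | nil => intro l' h _; cases l' <;> simp_all
  | cons x t ih =>
    intro l' h hv
    cases l' with
    | nil => simp at h
    | cons y t' =>
      simp only [List.length_cons, Nat.succ.injEq] at h
      rw [blockVal_cons, blockVal_cons, h] at hv
      have h1 := blockVal_lt t
      have h2 := blockVal_lt t'
      rw [h] at h1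
      have hxy : x = y ∧ blockVal t = blockVal t' := by
        cases x <;> cases y <;> simp at hv ⊢ <;> omega
      rw [hxy.1, ih t' h hxy.2]

/-- The map `X ↦ pad2(format(X))`, from binary strings of length `< 2^(m−1)` to sequences of
elements of `F_p`, is injective. -/
theorem pad2_injective (p m n : ℕ) [NeZero p] (hp : p.Prime)
    (hpl : 2 ^ (m - 1) < p) (hpu : p < 2 ^ m) (hn : 0 < n) (hnm : n < m) :
    ∀ X X' : List Bool, X.length < 2 ^ (m - 1) → X'.length < 2 ^ (m - 1) →
      pad2format p n X = pad2format p n X' → X = X' := by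
  intro X X' hX hX' h
  have h2n : 2 ^ n ≤ 2 ^ (m - 1) := Nat.pow_le_pow_right (by norm_num) (by omega)
  unfold pad2format at h
  have hlen := congrArg List.length h
  simp only [List.length_append, List.length_map, List.length_range, List.length_cons,
    List.length_nil] at hlen
  have hparts := List.append_inj h (by simp only [List.length_map, List.length_range]; omega)
  obtain ⟨hmap, hL⟩ := hparts
  have hLc : (X.length : ZMod p) = (X'.length : ZMod p) := by simpa using hL
  have hLeq : X.length = X'.length := by
    have h1 : ((X.length : ZMod p)).val = X.length := ZMod.val_cast_of_lt (by omega)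
    have h2 : ((X'.length : ZMod p)).val = X'.length := ZMod.val_cast_of_lt (by omega)
    rw [← h1, ← h2, hLc]
  rw [← hLeq] at hmap
  have hmap' := List.map_inj_left.mp hmap
  have hblock : ∀ i, i < (X.length + n - 1) / n →
      (X.drop (n * i)).take n = (X'.drop (n * i)).take n := by
    intro i hi
    have hc := hmap' i (List.mem_range.mpr hi)
    have hlen1 : ((X.drop (n * i)).take n).length = min n (X.length - n * i) := by simp
    have hlen2 : ((X'.drop (n * i)).take n).length = min n (X.length - n * i) := by
      simp [← hLeq]
    have hb1 : blockVal ((X.drop (n * i)).take n) < p := by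
      have := blockVal_lt ((X.drop (n * i)).take n)
      have h2 : 2 ^ ((X.drop (n * i)).take n).length ≤ 2 ^ n :=
        Nat.pow_le_pow_right (by norm_num) (by rw [hlen1]; omega)
      omega
    have hb2 : blockVal ((X'.drop (n * i)).take n) < p := by
      have := blockVal_lt ((X'.drop (n * i)).take n)
      have h2 : 2 ^ ((X'.drop (n * i)).take n).length ≤ 2 ^ n :=
        Nat.pow_le_pow_right (by norm_num) (by rw [hlen2]; omega)
      omega
    have hveq : blockVal ((X.drop (n * i)).take n) = blockVal ((X'.drop (n * i)).take n) := by
      have h1 := ZMod.val_cast_of_lt hb1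
      have h2 := ZMod.val_cast_of_lt hb2
      rw [← h1, ← h2, hc]
    exact blockVal_inj _ _ (by rw [hlen1, hlen2]) hveq
  apply List.ext_getElem hLeq
  intro k hk hk'
  have hi : k / n < (X.length + n - 1) / n := by
    have h1 : k / n + 1 = (k + n) / n := (Nat.add_div_right k hn).symm
    have h2 : (k + n) / n ≤ (X.length + n - 1) / n := Nat.div_le_div_right (by omega)
    omega
  have hb := hblock (k / n) hi
  have hjn : k % n < n := Nat.mod_lt _ hn
  have hkey : n * (k / n) + k % n = k := Nat.div_add_mod k n
  have hjL : k % n < X.length - n * (k / n) := by omega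
  have e1 : X[k] = ((X.drop (n * (k / n))).take n)[k % n]'(by simp; omega) := by
    simp [List.getElem_take, List.getElem_drop, hkey]
  have e2 : X'[k] = ((X'.drop (n * (k / n))).take n)[k % n]'(by simp [← hLeq]; omega) := by
    simp [List.getElem_take, List.getElem_drop, hkey]
  rw [e1, e2]
  simp only [hb]
end

section
/- The map sending a binary string X of length L < 2^{m−1} to the polynomial Q(x; M_1, ..., M_ℓ, bin_{m−1}(L)) ∈ F_p[x] arising in the c-decBRWHash construction is injective. That is, if X and X′ are distinct binary strings of lengths L, L′ < 2^{m−1}, then the corresponding polynomials Q and Q′ are distinct. -/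
/-- The polynomial `Q(x; M_1,…,M_ℓ, bin_{m−1}(L))` of the `c-decBRWHash` construction:
with `ℓ = ⌈L/n⌉`, `𝔫 = ⌈ℓ/c⌉`, `𝔪 = c𝔫`, zero blocks `M_{ℓ+1} = ⋯ = M_𝔪 = 0`,
`Q_j(x) = BRW(x; M_j, M_{c+j}, …, M_{𝔪−c+j})`, `d = 1` if `L = 0` and `d = 2^(⌊lg 𝔫⌋+1)`
otherwise, `Q_{c+1}(x) = Σ_{j=1}^c x^((c−j)d) Q_j(x)`, and finally
`Q(x) = x·(x·Q_{c+1}(x) + bin_{m−1}(L))`. -/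
noncomputable def decQ (p n c : ℕ) (BRW : List (ZMod p) → Polynomial (ZMod p)) (X : List Bool) :
    Polynomial (ZMod p) :=
  let L := X.length
  let ℓ := (L + n - 1) / n
  let nn := (ℓ + c - 1) / c
  let d := if L = 0 then 1 else 2 ^ (Nat.log 2 nn + 1)
  let Qsum := ∑ j ∈ Finset.range c, Polynomial.X ^ ((c - 1 - j) * d) *
      BRW ((List.range nn).map fun i =>
        ((blockVal ((X.drop (n * (c * i + j))).take n) : ℕ) : ZMod p))
  Polynomial.X * (Polynomial.X * Qsum + Polynomial.C (L : ZMod p))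

open Polynomial Finset

/-!
The constant and linear coefficients of `Q` are `0` and `L`, and `L < p`, so `Q` determines `L`
and then `Q_{c+1}`. As every `Q_j` has degree below `d`, `Q_{c+1}` is an expansion in base `x^d`
with digits `Q_1, …, Q_c`, which it therefore determines.

A BRW polynomial on a fixed number of blocks determines its blocks. For `l ≥ 4` blocks and
`2^r ≤ l < 2^(r+1)` write `BRW(M) = x^(2^r)·A + (M_(2^r)·A + R)`, where `A` (on `2^r - 1 ≥ 3`
blocks) is monic of degree `2^r - 1` and `R` has degree at most `2^r - 1`. The part of degree
`≥ 2^r` gives `A`. BRW polynomials on the same number of blocks agree in degree and leading coefficient,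
so `R - R'` has degree below `2^r - 1`, which forces `M_(2^r) = M'_(2^r)`; induction does the rest.

Finally each block is an integer below `2^n < p`, so the blocks determine the bit string.
-/

theorem blockVal_eq_ofDigits (b : List Bool) :
    blockVal b = Nat.ofDigits 2 (b.map Bool.toNat).reverse := by
  induction b using List.reverseRecOn with
  | nil => rfl
  | append_singleton b x ih =>
    rw [blockVal, List.foldl_append, ← blockVal, ih]
    simp [Nat.ofDigits_cons]
    ring

theorem lt_two_of_mem_reverse_map_toNat {b : List Bool} :
    ∀ x ∈ (b.map Bool.toNat).reverse, x < 2 := by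
  simp only [List.mem_reverse, List.mem_map]
  rintro _ ⟨a, -, rfl⟩
  exact Bool.toNat_lt a

theorem blockVal_lt_two_pow (b : List Bool) : blockVal b < 2 ^ b.length := by
  simpa [blockVal_eq_ofDigits] using
    Nat.ofDigits_lt_base_pow_length one_lt_two (l := (b.map Bool.toNat).reverse)
      lt_two_of_mem_reverse_map_toNat

theorem eq_of_blockVal_eq {b b' : List Bool} (hlen : b.length = b'.length)
    (h : blockVal b = blockVal b') : b = b' := by
  rw [blockVal_eq_ofDigits, blockVal_eq_ofDigits] at h
  have hdigits := Nat.ofDigits_inj_of_len_eq one_lt_two (by simpa using hlen)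
    lt_two_of_mem_reverse_map_toNat lt_two_of_mem_reverse_map_toNat h
  have htoNat : Function.Injective Bool.toNat := fun a b => by cases a <;> cases b <;> simp
  exact List.map_injective_iff.2 htoNat (List.reverse_injective hdigits)

theorem ZMod.natCast_inj_of_lt {p a b : ℕ} (ha : a < p) (hb : b < p)
    (h : (a : ZMod p) = b) : a = b := by
  rwa [ZMod.natCast_eq_natCast_iff', Nat.mod_eq_of_lt ha, Nat.mod_eq_of_lt hb] at h

theorem eq_of_blockVal_cast_eq {p n : ℕ} (hnp : 2 ^ n ≤ p) {b b' : List Bool}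
    (hb : b.length ≤ n) (hlen : b.length = b'.length)
    (h : (blockVal b : ZMod p) = blockVal b') : b = b' := by
  have hlt : ∀ b : List Bool, b.length ≤ n → blockVal b < p := fun b hb =>
    (blockVal_lt_two_pow b).trans_le ((Nat.pow_le_pow_right two_pos hb).trans hnp)
  exact eq_of_blockVal_eq hlen (ZMod.natCast_inj_of_lt (hlt b hb) (hlt b' (hlen ▸ hb)) h)

theorem List.eq_of_forall_take_drop_mul_eq {α : Type*} {n : ℕ} (hn : 0 < n) {l l' : List α}
    (hlen : l.length = l'.length)
    (h : ∀ k, (l.drop (n * k)).take n = (l'.drop (n * k)).take n) : l = l' := by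
  refine List.ext_getElem hlen fun i hi hi' => ?_
  have hk := congrArg (·[i % n]?) (h (i / n))
  simpa [Nat.mod_lt _ hn, Nat.div_add_mod, hi, hi'] using hk

theorem List.eq_of_take_getD_drop_eq {α : Type*} {l l' : List α} {i : ℕ} {d : α}
    (hi : i < l.length) (hlen : l.length = l'.length) (htake : l.take i = l'.take i)
    (hget : l.getD i d = l'.getD i d) (hdrop : l.drop (i + 1) = l'.drop (i + 1)) : l = l' := by
  have hdrop_i : l.drop i = l'.drop i := by
    rw [List.drop_eq_getElem_cons hi, List.drop_eq_getElem_cons (i := i) (l := l') (by omega),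
      hdrop]
    rw [List.getD_eq_getElem _ _ hi, List.getD_eq_getElem _ _ (by omega)] at hget
    rw [hget]
  rw [← List.take_append_drop i l, htake, hdrop_i, List.take_append_drop]

theorem Nat.div_lt_ceilDiv_ceilDiv {L n c k : ℕ} (hn : 0 < n) (hc : 0 < c) (hk : n * k < L) :
    k / c < ((L + n - 1) / n + c - 1) / c := by
  have hkl : k < (L + n - 1) / n :=
    lt_of_not_ge fun h => hk.not_ge ((ceilDiv_le_iff_le_mul (b := L) hn).1 h)
  have hlc : (L + n - 1) / n ≤ c * (((L + n - 1) / n + c - 1) / c) :=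
    (ceilDiv_le_iff_le_mul hc).1 le_rfl
  rw [Nat.div_lt_iff_lt_mul hc, mul_comm]
  omega

namespace Polynomial

variable {R : Type*}

theorem eq_and_eq_of_X_pow_mul_add_eq [CommRing R] [Nontrivial R] {N : ℕ} {f g f' g' : R[X]}
    (hg : g.natDegree < N) (hg' : g'.natDegree < N) (h : X ^ N * f + g = X ^ N * f' + g') :
    f = f' ∧ g = g' := by
  have hdeg : ∀ {g : R[X]}, g.natDegree < N → g.degree < (X ^ N : R[X]).degree := fun hg => by
    rw [degree_X_pow]; exact degree_le_natDegree.trans_lt (by exact_mod_cast hg)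
  have hdiv := div_modByMonic_unique f g (monic_X_pow N) ⟨add_comm _ _, hdeg hg⟩
  have hdiv' := div_modByMonic_unique f' g' (monic_X_pow N) ⟨add_comm _ _, hdeg hg'⟩
  rw [h] at hdiv
  exact ⟨hdiv.1.symm.trans hdiv'.1, hdiv.2.symm.trans hdiv'.2⟩

theorem sum_range_succ_X_pow_mul [CommSemiring R] (c d : ℕ) (f : ℕ → R[X]) :
    ∑ j ∈ range (c + 1), X ^ ((c + 1 - 1 - j) * d) * f j =
      X ^ d * ∑ j ∈ range c, X ^ ((c - 1 - j) * d) * f j + f c := by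
  rw [sum_range_succ, mul_sum, Nat.add_sub_cancel, Nat.sub_self, zero_mul, pow_zero, one_mul]
  congr 1
  refine sum_congr rfl fun j hj => ?_
  rw [← mul_assoc, ← pow_add, show c - j = c - 1 - j + 1 by grind]
  ring

theorem eq_of_sum_X_pow_mul_eq [CommRing R] [Nontrivial R] {d : ℕ} {f g : ℕ → R[X]} :
    ∀ {c : ℕ}, (∀ j < c, (f j).natDegree < d) → (∀ j < c, (g j).natDegree < d) →
      ∑ j ∈ range c, X ^ ((c - 1 - j) * d) * f j =
        ∑ j ∈ range c, X ^ ((c - 1 - j) * d) * g j →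
      ∀ j < c, f j = g j
  | 0, _, _, _ => by simp
  | c + 1, hf, hg, h => by
    rw [sum_range_succ_X_pow_mul, sum_range_succ_X_pow_mul] at h
    obtain ⟨hsum, hlast⟩ := eq_and_eq_of_X_pow_mul_add_eq (hf c c.lt_succ_self)
      (hg c c.lt_succ_self) h
    intro j hj
    obtain hj | rfl := Nat.lt_succ_iff_lt_or_eq.1 hj
    · exact eq_of_sum_X_pow_mul_eq (fun i hi => hf i (by omega)) (fun i hi => hg i (by omega))
        hsum j hj
    · exact hlast

end Polynomial

/-- For `k ≥ 3` blocks this is the degree of a BRW polynomial; for `k ≤ 2` it is only an upper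
bound. -/
def brwDegree (k : ℕ) : ℕ := 2 ^ (Nat.log 2 k + 1) - 1

theorem brwDegree_mono : Monotone brwDegree := fun _ _ h =>
  Nat.sub_le_sub_right (Nat.pow_le_pow_right two_pos (Nat.succ_le_succ (Nat.log_mono_right h))) 1

theorem sub_one_lt_brwDegree (k : ℕ) : k - 1 < brwDegree k := by
  have hk := Nat.lt_pow_succ_log_self one_lt_two k
  have h2 : 2 ≤ 2 ^ (Nat.log 2 k + 1) := Nat.le_self_pow (Nat.succ_ne_zero _) 2
  rw [brwDegree]
  omega

theorem brwDegree_two_pow_sub_one {r : ℕ} (hr : 0 < r) : brwDegree (2 ^ r - 1) = 2 ^ r - 1 := by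
  have hlt : 2 ^ (r - 1) < 2 ^ r := Nat.pow_lt_pow_right one_lt_two (by omega)
  have hpos := Nat.one_le_two_pow (n := r - 1)
  have hlog : Nat.log 2 (2 ^ r - 1) = r - 1 :=
    Nat.log_eq_of_pow_le_of_lt_pow (by omega) (by rw [Nat.sub_add_cancel hr]; omega)
  rw [brwDegree, hlog, Nat.sub_add_cancel hr]

theorem brwDegree_le_of_lt_two_pow {k r : ℕ} (hr : 0 < r) (hk : k < 2 ^ r) :
    brwDegree k ≤ 2 ^ r - 1 :=
  (brwDegree_mono (Nat.le_sub_one_of_lt hk)).trans_eq (brwDegree_two_pow_sub_one hr)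

theorem two_pow_log_bounds {k : ℕ} (hk : 4 ≤ k) :
    4 ≤ 2 ^ Nat.log 2 k ∧ 2 ^ Nat.log 2 k ≤ k ∧ k < 2 * 2 ^ Nat.log 2 k := by
  refine ⟨?_, Nat.pow_log_le_self 2 (by omega), ?_⟩
  · calc 4 = 2 ^ 2 := rfl
      _ ≤ 2 ^ Nat.log 2 k := Nat.pow_le_pow_right two_pos (Nat.le_log_of_pow_le one_lt_two hk)
  · simpa [pow_succ, mul_comm] using Nat.lt_pow_succ_log_self one_lt_two k

structure IsBRW {R : Type*} [CommRing R] (B : List R → R[X]) : Prop where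
  nil : B [] = 0
  singleton : ∀ a, B [a] = C a
  pair : ∀ a b, B [a, b] = C a * X + C b
  triple : ∀ a b c, B [a, b, c] = (X + C a) * (X ^ 2 + C b) + C c
  split : ∀ l : List R, 4 ≤ l.length →
    B l = B (l.take (2 ^ Nat.log 2 l.length - 1)) *
      (X ^ (2 ^ Nat.log 2 l.length) + C (l.getD (2 ^ Nat.log 2 l.length - 1) 0)) +
      B (l.drop (2 ^ Nat.log 2 l.length))

namespace IsBRW

variable {R : Type*} [CommRing R] {B : List R → R[X]}

theorem triple_eq (hB : IsBRW B) (a b c : R) :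
    B [a, b, c] = X ^ 3 + (C a * X ^ 2 + C b * X + C (a * b + c)) := by
  rw [hB.triple, C_add, C_mul]
  ring

theorem natDegree_le_of_length_le_two (hB : IsBRW B) {l : List R} (hl : l.length ≤ 2) :
    (B l).natDegree ≤ l.length - 1 := by
  match l, hl with
  | [], _ => simp [hB.nil]
  | [a], _ => simp [hB.singleton]
  | [a, b], _ => simpa [hB.pair] using natDegree_linear_le (a := a) (b := b)

theorem eq_of_length_eq_of_length_le_three (hB : IsBRW B) {l l' : List R}
    (hlen : l.length = l'.length) (hl : l.length ≤ 3) (h : B l = B l') : l = l' := by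
  obtain h0 | h1 | h2 | h3 : l.length = 0 ∨ l.length = 1 ∨ l.length = 2 ∨ l.length = 3 := by
    omega
  · rw [List.eq_nil_of_length_eq_zero h0, List.eq_nil_of_length_eq_zero (l := l') (by omega)]
  · obtain ⟨a, rfl⟩ := List.length_eq_one_iff.1 h1
    obtain ⟨a', rfl⟩ := List.length_eq_one_iff.1 (hlen ▸ h1)
    rw [hB.singleton, hB.singleton] at h
    rw [C_injective h]
  · obtain ⟨a, b, rfl⟩ := List.length_eq_two.1 h2
    obtain ⟨a', b', rfl⟩ := List.length_eq_two.1 (hlen ▸ h2)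
    rw [hB.pair, hB.pair] at h
    have h1 : a = a' := by simpa using congrArg (coeff · 1) h
    have h0 : b = b' := by simpa using congrArg (coeff · 0) h
    rw [h1, h0]
  · obtain ⟨a, b, c, rfl⟩ := List.length_eq_three.1 h3
    obtain ⟨a', b', c', rfl⟩ := List.length_eq_three.1 (hlen ▸ h3)
    rw [hB.triple_eq, hB.triple_eq] at h
    have h2 : a = a' := by simpa using congrArg (coeff · 2) h
    have h1 : b = b' := by simpa using congrArg (coeff · 1) h
    have h0 : a * b + c = a' * b' + c' := by simpa using congrArg (coeff · 0) h
    rw [h2, h1] at h0 ⊢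
    rw [add_left_cancel h0]

variable [Nontrivial R]

theorem monic_and_natDegree_eq (hB : IsBRW B) {l : List R} (hl : 3 ≤ l.length) :
    (B l).Monic ∧ (B l).natDegree = brwDegree l.length := by
  induction hk : l.length using Nat.strong_induction_on generalizing l with
  | _ k ih =>
  obtain h3 | h4 := (show k = 3 ∨ 4 ≤ k by omega)
  · obtain ⟨a, b, c, rfl⟩ := List.length_eq_three.1 (hk.trans h3)
    have hlow : (C a * X ^ 2 + C b * X + C (a * b + c)).degree < ((3 : ℕ) : WithBot ℕ) := by
      compute_degree!
    subst h3
    rw [hB.triple_eq, show brwDegree 3 = 3 from brwDegree_two_pow_sub_one (r := 2) two_pos]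
    exact ⟨monic_X_pow_add hlow, by compute_degree!⟩
  · subst hk
    have hsplit := hB.split l h4
    set N := 2 ^ Nat.log 2 l.length
    obtain ⟨hN4, hNl, hlN⟩ := two_pow_log_bounds h4
    have hr : 0 < Nat.log 2 l.length := Nat.log_pos one_lt_two (by omega)
    obtain ⟨hAmonic, hAdeg⟩ := ih (N - 1) (by omega) (l := l.take (N - 1))
      (by simp; omega) (by simp; omega)
    rw [brwDegree_two_pow_sub_one hr] at hAdeg
    have hRdeg : (B (l.drop N)).natDegree ≤ N - 1 := by
      by_cases hR : 3 ≤ (l.drop N).length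
      · rw [(ih _ (by simp; omega) hR rfl).2]
        exact brwDegree_le_of_lt_two_pow hr (by simp; omega)
      · exact (hB.natDegree_le_of_length_le_two (by omega)).trans (by simp; omega)
    have hfactor := monic_X_pow_add_C (l.getD (N - 1) 0) (n := N) (by omega)
    have hPdeg : (B (l.take (N - 1)) * (X ^ N + C (l.getD (N - 1) 0))).natDegree = 2 * N - 1 := by
      rw [hAmonic.natDegree_mul hfactor, hAdeg, natDegree_X_pow_add_C]
      omega
    have hlt : (B (l.drop N)).natDegree <
        (B (l.take (N - 1)) * (X ^ N + C (l.getD (N - 1) 0))).natDegree := by omega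
    rw [hsplit, brwDegree, pow_succ, natDegree_add_eq_left_of_natDegree_lt hlt, hPdeg]
    exact ⟨(hAmonic.mul hfactor).add_of_left (degree_lt_degree hlt), by omega⟩

theorem natDegree_le (hB : IsBRW B) (l : List R) : (B l).natDegree ≤ brwDegree l.length := by
  by_cases hl : 3 ≤ l.length
  · exact (hB.monic_and_natDegree_eq hl).2.le
  · exact (hB.natDegree_le_of_length_le_two (by omega)).trans (sub_one_lt_brwDegree _).le

theorem natDegree_sub_lt (hB : IsBRW B) {l l' : List R} (hlen : l.length = l'.length) :
    (B l - B l').natDegree < brwDegree l.length := by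
  by_cases hl : 3 ≤ l.length
  · by_cases heq : B l = B l'
    · rw [heq, sub_self, natDegree_zero]
      exact (Nat.zero_le _).trans_lt (sub_one_lt_brwDegree _)
    obtain ⟨hmonic, hdeg⟩ := hB.monic_and_natDegree_eq hl
    obtain ⟨hmonic', hdeg'⟩ := hB.monic_and_natDegree_eq (hlen ▸ hl)
    rw [← hdeg]
    refine natDegree_lt_natDegree (sub_ne_zero.2 heq) (degree_sub_lt_left ?_ hmonic.ne_zero
      (by rw [hmonic.leadingCoeff, hmonic'.leadingCoeff]))
    rw [degree_eq_natDegree hmonic.ne_zero, degree_eq_natDegree hmonic'.ne_zero, hdeg, hdeg', hlen]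
  · calc (B l - B l').natDegree ≤ l.length - 1 :=
          natDegree_sub_le_of_le (hB.natDegree_le_of_length_le_two (by omega))
            (hlen ▸ hB.natDegree_le_of_length_le_two (by omega)) |>.trans_eq (max_self _)
      _ < brwDegree l.length := sub_one_lt_brwDegree _

theorem monic_and_natDegree_take (hB : IsBRW B) {l : List R} {k : ℕ} (hl : l.length = k)
    (hk : 4 ≤ k) :
    (B (l.take (2 ^ Nat.log 2 k - 1))).Monic ∧
      (B (l.take (2 ^ Nat.log 2 k - 1))).natDegree = 2 ^ Nat.log 2 k - 1 := by
  obtain ⟨hN4, hNl, -⟩ := two_pow_log_bounds hk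
  have := hB.monic_and_natDegree_eq (l := l.take (2 ^ Nat.log 2 k - 1)) (by simp; omega)
  rwa [List.length_take, min_eq_left (by omega),
    brwDegree_two_pow_sub_one (Nat.log_pos one_lt_two (by omega))] at this

theorem natDegree_drop_le (hB : IsBRW B) {l : List R} {k : ℕ} (hl : l.length = k) (hk : 4 ≤ k) :
    (B (l.drop (2 ^ Nat.log 2 k))).natDegree ≤ 2 ^ Nat.log 2 k - 1 := by
  obtain ⟨-, -, hlN⟩ := two_pow_log_bounds hk
  exact (hB.natDegree_le _).trans
    (brwDegree_le_of_lt_two_pow (Nat.log_pos one_lt_two (by omega)) (by simp; omega))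

theorem split_parts_eq_of_eq (hB : IsBRW B) {l l' : List R} (hlen : l.length = l'.length)
    (hl : 4 ≤ l.length) (h : B l = B l') :
    B (l.take (2 ^ Nat.log 2 l.length - 1)) = B (l'.take (2 ^ Nat.log 2 l.length - 1)) ∧
      l.getD (2 ^ Nat.log 2 l.length - 1) 0 = l'.getD (2 ^ Nat.log 2 l.length - 1) 0 ∧
      B (l.drop (2 ^ Nat.log 2 l.length)) = B (l'.drop (2 ^ Nat.log 2 l.length)) := by
  have hsplit := hB.split l hl
  have hsplit' := hB.split l' (hlen ▸ hl)
  rw [← hlen] at hsplit'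
  have hlow : ∀ t : List R, t.length = l.length →
      (C (t.getD (2 ^ Nat.log 2 l.length - 1) 0) * B (t.take (2 ^ Nat.log 2 l.length - 1)) +
        B (t.drop (2 ^ Nat.log 2 l.length))).natDegree < 2 ^ Nat.log 2 l.length := fun t ht =>
    (natDegree_add_le_of_degree_le ((natDegree_C_mul_le _ _).trans
      (hB.monic_and_natDegree_take ht hl).2.le) (hB.natDegree_drop_le ht hl)).trans_lt
      (Nat.sub_one_lt (by positivity))
  obtain ⟨hAmonic, hAdeg⟩ := hB.monic_and_natDegree_take rfl hl
  set N := 2 ^ Nat.log 2 l.length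
  have hsum : X ^ N * B (l.take (N - 1)) +
        (C (l.getD (N - 1) 0) * B (l.take (N - 1)) + B (l.drop N)) =
      X ^ N * B (l'.take (N - 1)) +
        (C (l'.getD (N - 1) 0) * B (l'.take (N - 1)) + B (l'.drop N)) := by
    linear_combination hsplit.symm.trans (h.trans hsplit')
  obtain ⟨hA, hrest⟩ := eq_and_eq_of_X_pow_mul_add_eq (hlow l rfl) (hlow l' hlen.symm) hsum
  rw [← hA] at hrest
  have hm : l.getD (N - 1) 0 = l'.getD (N - 1) 0 := by
    by_contra hne
    have hdiff : C (l.getD (N - 1) 0 - l'.getD (N - 1) 0) * B (l.take (N - 1)) =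
        B (l'.drop N) - B (l.drop N) := by
      rw [C_sub]; linear_combination hrest
    have hlt := hB.natDegree_sub_lt (l := l'.drop N) (l' := l.drop N) (by simp [hlen])
    have hlead :
        (l.getD (N - 1) 0 - l'.getD (N - 1) 0) * (B (l.take (N - 1))).leadingCoeff ≠ 0 := by
      rw [hAmonic.leadingCoeff, mul_one]; exact sub_ne_zero.2 hne
    rw [← hdiff, natDegree_C_mul_of_mul_ne_zero hlead, hAdeg] at hlt
    obtain ⟨-, hNl, hlN⟩ := two_pow_log_bounds hl
    have := brwDegree_le_of_lt_two_pow (Nat.log_pos (n := l.length) one_lt_two (by omega))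
      (k := (l'.drop N).length) (by simp; omega)
    omega
  rw [hm] at hrest
  exact ⟨hA, hm, add_left_cancel hrest⟩

theorem eq_of_length_eq (hB : IsBRW B) {l l' : List R} (hlen : l.length = l'.length)
    (h : B l = B l') : l = l' := by
  induction hk : l.length using Nat.strong_induction_on generalizing l l' with
  | _ k ih =>
  by_cases hl : l.length ≤ 3
  · exact hB.eq_of_length_eq_of_length_le_three hlen hl h
  subst hk
  obtain ⟨hN4, hNl, hlN⟩ := two_pow_log_bounds (by omega : 4 ≤ l.length)
  obtain ⟨htake, hget, hdrop⟩ := hB.split_parts_eq_of_eq hlen (by omega) h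
  refine List.eq_of_take_getD_drop_eq (by omega) hlen
    (ih _ (by simp; omega) (by simp; omega) htake rfl) hget ?_
  rw [Nat.sub_add_cancel (by omega)]
  exact ih _ (by simp; omega) (by simp [hlen]) hdrop rfl

theorem natDegree_lt_two_pow (hB : IsBRW B) {l : List R} {k : ℕ} (hl : l.length = k) :
    (B l).natDegree < 2 ^ (Nat.log 2 k + 1) :=
  hl ▸ (hB.natDegree_le l).trans_lt (Nat.sub_one_lt (by positivity))

end IsBRW

theorem decQ_injective_general (p m n c : ℕ)
    (hpl : 2 ^ (m - 1) < p) (hn : 0 < n) (hnm : n < m) (hc : 0 < c)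
    (BRW : List (ZMod p) → Polynomial (ZMod p))
    (hB0 : BRW [] = 0)
    (hB1 : ∀ a : ZMod p, BRW [a] = Polynomial.C a)
    (hB2 : ∀ a b : ZMod p, BRW [a, b] = Polynomial.C a * Polynomial.X + Polynomial.C b)
    (hB3 : ∀ a b c' : ZMod p, BRW [a, b, c'] =
      (Polynomial.X + Polynomial.C a) * (Polynomial.X ^ 2 + Polynomial.C b) + Polynomial.C c')
    (hBrec : ∀ l : List (ZMod p), 4 ≤ l.length →
      BRW l = BRW (l.take (2 ^ Nat.log 2 l.length - 1)) *
        (Polynomial.X ^ (2 ^ Nat.log 2 l.length) +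
          Polynomial.C (l.getD (2 ^ Nat.log 2 l.length - 1) 0)) +
        BRW (l.drop (2 ^ Nat.log 2 l.length))) :
    ∀ X X' : List Bool, X.length < 2 ^ (m - 1) → X'.length < 2 ^ (m - 1) → X ≠ X' →
      decQ p n c BRW X ≠ decQ p n c BRW X' := by
  intro s s' hs hs' hne heq
  have hB : IsBRW BRW := ⟨hB0, hB1, hB2, hB3, hBrec⟩
  have : Fact (1 < p) := ⟨Nat.one_le_two_pow.trans_lt hpl⟩
  obtain ⟨hsum, hL⟩ := eq_and_eq_of_X_pow_mul_add_eq (N := 1) (g := C _) (g' := C _)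
    (by simp) (by simp)
    (by simpa only [pow_one] using isRegular_X.left heq)
  have hlen := ZMod.natCast_inj_of_lt (hs.trans hpl) (hs'.trans hpl) (C_injective hL)
  rcases Nat.eq_zero_or_pos s.length with h0 | hpos
  · exact hne ((List.eq_nil_of_length_eq_zero h0).trans
      (List.eq_nil_of_length_eq_zero (l := s') (by omega)).symm)
  rw [← hlen, if_neg hpos.ne'] at hsum
  have hQ := eq_of_sum_X_pow_mul_eq (fun _ _ => hB.natDegree_lt_two_pow (by simp))
    (fun _ _ => hB.natDegree_lt_two_pow (by simp)) hsum
  refine hne (List.eq_of_forall_take_drop_mul_eq hn hlen fun k => ?_)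
  by_cases hk : s.length ≤ n * k
  · rw [List.drop_eq_nil_of_le hk, List.drop_eq_nil_of_le (hlen ▸ hk)]
  have hblocks := hB.eq_of_length_eq (by simp) (hQ (k % c) (Nat.mod_lt _ hc))
  have hentry := List.map_inj_left.1 hblocks (k / c)
    (List.mem_range.2 (Nat.div_lt_ceilDiv_ceilDiv hn hc (not_le.1 hk)))
  rw [Nat.div_add_mod] at hentry
  have hnp : 2 ^ n ≤ p := (Nat.pow_le_pow_right two_pos (show n ≤ m - 1 by omega)).trans hpl.le
  exact eq_of_blockVal_cast_eq hnp (by simp) (by simp [hlen]) hentry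

/-- The map sending a binary string `X` of length `L < 2^(m−1)` to the polynomial
`Q(x; M_1,…,M_ℓ, bin_{m−1}(L)) ∈ F_p[x]` of the `c-decBRWHash` construction is injective. -/
theorem decQ_injective (p m n c : ℕ) [NeZero p] (hp : p.Prime)
    (hpl : 2 ^ (m - 1) < p) (hpu : p < 2 ^ m) (hn : 0 < n) (hnm : n < m) (hc : 0 < c)
    (BRW : List (ZMod p) → Polynomial (ZMod p))
    (hB0 : BRW [] = 0)
    (hB1 : ∀ a : ZMod p, BRW [a] = Polynomial.C a)
    (hB2 : ∀ a b : ZMod p, BRW [a, b] = Polynomial.C a * Polynomial.X + Polynomial.C b)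
    (hB3 : ∀ a b c' : ZMod p, BRW [a, b, c'] =
      (Polynomial.X + Polynomial.C a) * (Polynomial.X ^ 2 + Polynomial.C b) + Polynomial.C c')
    (hBrec : ∀ l : List (ZMod p), 4 ≤ l.length →
      BRW l = BRW (l.take (2 ^ Nat.log 2 l.length - 1)) *
        (Polynomial.X ^ (2 ^ Nat.log 2 l.length) +
          Polynomial.C (l.getD (2 ^ Nat.log 2 l.length - 1) 0)) +
        BRW (l.drop (2 ^ Nat.log 2 l.length))) :
    ∀ X X' : List Bool, X.length < 2 ^ (m - 1) → X'.length < 2 ^ (m - 1) → X ≠ X' →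
      decQ p n c BRW X ≠ decQ p n c BRW X' :=
  decQ_injective_general p m n c hpl hn hnm hc BRW hB0 hB1 hB2 hB3 hBrec
end

section
/- For integers l ≥ 4 and c ≥ 1, let ℓ′ = ⌊l/c⌋ and ρ = l mod c. Then for any τ ∈ F and M_1, ..., M_l ∈ F, writing P = Σ_{j=1}^{c} τ^{c+1−j} · Poly(τ^c; M_j, M_{c+j}, ..., M_{cℓ′−c+j}), one has τ·Poly(τ; M_1, ..., M_l) = P if ρ = 0, and τ·Poly(τ; M_1, ..., M_l) = τ·Poly(τ; P + M_{l−ρ+1}, M_{l−ρ+2}, ..., M_l) if ρ > 0. -/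
/-- `Poly(τ; N_1,…,N_k) = N_1 τ^{k−1} + N_2 τ^{k−2} + ⋯ + N_k` (and `0` for the empty list). -/
def polyEval {F : Type*} [Field F] (τ : F) (L : List F) : F :=
  ∑ i ∈ Finset.range L.length, L.getD i 0 * τ ^ (L.length - 1 - i)

lemma polyEval_map_range {F : Type*} [Field F] (τ : F) (n : ℕ) (f : ℕ → F) :
    polyEval τ ((List.range n).map f) = ∑ i ∈ Finset.range n, f i * τ ^ (n - 1 - i) := by
  unfold polyEval
  simp only [List.length_map, List.length_range]
  refine Finset.sum_congr rfl fun i hi => ?_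
  rw [List.getD_eq_getElem?_getD, List.getElem?_map, List.getElem?_range (Finset.mem_range.mp hi)]
  simp

lemma polyEval_cons {F : Type*} [Field F] (τ a : F) (L : List F) :
    polyEval τ (a :: L) = a * τ ^ L.length + polyEval τ L := by
  unfold polyEval
  simp only [List.length_cons]
  rw [Finset.sum_range_succ']
  simp only [List.getD_cons_succ, List.getD_cons_zero, Nat.add_sub_cancel, Nat.sub_zero]
  rw [add_comm]
  congr 1
  refine Finset.sum_congr rfl fun i hi => ?_
  have : L.length - (i+1) = L.length - 1 - i := by omega
  rw [this]

lemma mul_le_key (c i l' : ℕ) (hi : i < l') : c * i + c ≤ c * l' := by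
  have h := Nat.mul_le_mul_left c (Nat.succ_le_of_lt hi)
  simpa [Nat.mul_succ] using h

lemma decim_key {F : Type*} [Field F] (c l' : ℕ) (hc : 0 < c) (τ : F) (M : ℕ → F) :
    ∑ j ∈ Finset.Icc 1 c, τ ^ (c + 1 - j) *
      polyEval (τ ^ c) ((List.range l').map fun i => M (c * i + j))
    = ∑ n ∈ Finset.range (c * l'), M (n + 1) * τ ^ (c * l' - n) := by
  have step : ∀ j ∈ Finset.Icc 1 c, τ ^ (c + 1 - j) *
      polyEval (τ ^ c) ((List.range l').map fun i => M (c * i + j))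
      = ∑ i ∈ Finset.range l', M (c * i + j) * τ ^ (c * l' - (c * i + j) + 1) := by
    intro j hj
    obtain ⟨hj1, hj2⟩ := Finset.mem_Icc.mp hj
    rw [polyEval_map_range, Finset.mul_sum]
    refine Finset.sum_congr rfl fun i hi => ?_
    have hi' := Finset.mem_range.mp hi
    have hcc := mul_le_key c i l' hi'
    rw [← pow_mul, ← mul_assoc, mul_comm (τ ^ (c+1-j)), mul_assoc, ← pow_add]
    congr 1
    have h1 : c * (l' - 1 - i) = c * l' - c - c * i := by
      rw [Nat.mul_sub, Nat.mul_sub, mul_one]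
    congr 1
    rw [h1]
    omega
  rw [Finset.sum_congr rfl step, ← Finset.sum_product']
  refine Finset.sum_nbij' (fun p => c * p.2 + p.1 - 1) (fun n => (n % c + 1, n / c))
    ?_ ?_ ?_ ?_ ?_
  · rintro ⟨j, i⟩ hp
    simp only [Finset.mem_product, Finset.mem_Icc, Finset.mem_range] at hp
    obtain ⟨⟨hj1, hj2⟩, hi⟩ := hp
    have hcc := mul_le_key c i l' hi
    simp only [Finset.mem_range]
    show c * i + j - 1 < c * l'
    omega
  · intro n hn
    have hn' := Finset.mem_range.mp hn
    have hm : n % c < c := Nat.mod_lt _ hc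
    have hd : n / c < l' := by
      rw [Nat.div_lt_iff_lt_mul hc, mul_comm]; exact hn'
    simp only [Finset.mem_product, Finset.mem_Icc, Finset.mem_range]
    exact ⟨⟨by omega, by omega⟩, hd⟩
  · rintro ⟨j, i⟩ hp
    simp only [Finset.mem_product, Finset.mem_Icc, Finset.mem_range] at hp
    obtain ⟨⟨hj1, hj2⟩, hi⟩ := hp
    show ((c * i + j - 1) % c + 1, (c * i + j - 1) / c) = (j, i)
    have he : c * i + j - 1 = c * i + (j - 1) := by omega
    rw [he]
    have h1 : (c * i + (j - 1)) % c = j - 1 := by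
      rw [Nat.mul_add_mod, Nat.mod_eq_of_lt (by omega)]
    have h2 : (c * i + (j - 1)) / c = i := by
      rw [Nat.mul_add_div hc, Nat.div_eq_of_lt (by omega)]
      omega
    simp only [Prod.mk.injEq]
    constructor
    · rw [h1]; omega
    · exact h2
  · intro n hn
    show c * (n / c) + n % c + 1 - 1 = n
    have := Nat.div_add_mod n c
    omega
  · rintro ⟨j, i⟩ hp
    simp only [Finset.mem_product, Finset.mem_Icc, Finset.mem_range] at hp
    obtain ⟨⟨hj1, hj2⟩, hi⟩ := hp
    have hcc := mul_le_key c i l' hi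
    show M (c * i + j) * τ ^ (c * l' - (c * i + j) + 1)
      = M (c * i + j - 1 + 1) * τ ^ (c * l' - (c * i + j - 1))
    congr 2
    · omega
    · omega

lemma tau_mul_polyEval {F : Type*} [Field F] (τ : F) (m : ℕ) (M : ℕ → F) :
    τ * polyEval τ ((List.range m).map fun i => M (i + 1))
    = ∑ n ∈ Finset.range m, M (n + 1) * τ ^ (m - n) := by
  rw [polyEval_map_range, Finset.mul_sum]
  refine Finset.sum_congr rfl fun n hn => ?_
  have hn' := Finset.mem_range.mp hn
  rw [mul_left_comm, ← pow_succ']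
  congr 2
  omega

/-- Decimated Horner: for `l ≥ 4`, `c ≥ 1`, with `ℓ′ = ⌊l/c⌋`, `ρ = l mod c`, and
`P = Σ_{j=1}^{c} τ^{c+1−j}·Poly(τ^c; M_j, M_{c+j}, …, M_{cℓ′−c+j})`, one has
`τ·Poly(τ; M_1,…,M_l) = P` if `ρ = 0`, and
`τ·Poly(τ; M_1,…,M_l) = τ·Poly(τ; P + M_{l−ρ+1}, M_{l−ρ+2}, …, M_l)` if `ρ > 0`. -/
theorem decimated_horner {F : Type*} [Field F] (l c : ℕ) (hl : 4 ≤ l) (hc : 1 ≤ c)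
    (τ : F) (M : ℕ → F) :
    let l' := l / c
    let ρ := l % c
    let P := ∑ j ∈ Finset.Icc 1 c, τ ^ (c + 1 - j) *
      polyEval (τ ^ c) ((List.range l').map fun i => M (c * i + j))
    (ρ = 0 → τ * polyEval τ ((List.range l).map fun i => M (i + 1)) = P) ∧
    (0 < ρ → τ * polyEval τ ((List.range l).map fun i => M (i + 1)) =
      τ * polyEval τ
        ((P + M (l - ρ + 1)) :: ((List.range (ρ - 1)).map fun i => M (l - ρ + 2 + i)))) := by
  intro l' ρ P
  have hcpos : 0 < c := hc
  have hPkey : P = ∑ n ∈ Finset.range (c * l'), M (n + 1) * τ ^ (c * l' - n) :=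
    decim_key c l' hcpos τ M
  have hll : c * l' + ρ = l := by
    have := Nat.div_add_mod l c
    simpa [l', ρ] using this
  constructor
  · intro h0
    have hl0 : c * l' = l := by
      have : ρ = l % c := rfl
      omega
    rw [tau_mul_polyEval, hPkey, hl0]
  · intro hρ
    rw [tau_mul_polyEval]
    rw [polyEval_cons, polyEval_map_range]
    simp only [List.length_map, List.length_range]
    have hτρ : τ * τ ^ (ρ - 1) = τ ^ ρ := by
      rw [← pow_succ']
      congr 1
      omega
    rw [mul_add, ← mul_assoc, mul_comm τ (P + M (l - ρ + 1)), mul_assoc, hτρ, Finset.mul_sum]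
    have hterm : ∀ i ∈ Finset.range (ρ - 1),
        τ * (M (l - ρ + 2 + i) * τ ^ (ρ - 1 - 1 - i)) = M (l - ρ + 2 + i) * τ ^ (ρ - 1 - i) := by
      intro i hi
      have hi' := Finset.mem_range.mp hi
      rw [mul_left_comm, ← pow_succ']
      congr 2
      omega
    rw [Finset.sum_congr rfl hterm]
    have hsplit : ∑ n ∈ Finset.range l, M (n + 1) * τ ^ (l - n)
        = (∑ n ∈ Finset.range (c * l'), M (n + 1) * τ ^ (l - n))
          + ∑ i ∈ Finset.range ρ, M (c * l' + i + 1) * τ ^ (l - (c * l' + i)) := by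
      have h := Finset.sum_range_add (fun n => M (n + 1) * τ ^ (l - n)) (c * l') ρ
      rw [hll] at h
      exact h
    have h1 : ∑ n ∈ Finset.range (c * l'), M (n + 1) * τ ^ (l - n) = P * τ ^ ρ := by
      rw [hPkey, Finset.sum_mul]
      refine Finset.sum_congr rfl fun n hn => ?_
      have hn' := Finset.mem_range.mp hn
      rw [mul_assoc, ← pow_add]
      congr 2
      omega
    have h2 : ∑ i ∈ Finset.range ρ, M (c * l' + i + 1) * τ ^ (l - (c * l' + i))
        = M (l - ρ + 1) * τ ^ ρ
          + ∑ i ∈ Finset.range (ρ - 1), M (l - ρ + 2 + i) * τ ^ (ρ - 1 - i) := by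
      have hr : Finset.range ρ = Finset.range ((ρ - 1) + 1) := by
        congr 1
        omega
      rw [hr, Finset.sum_range_succ']
      rw [add_comm]
      congr 1
      · congr 2
        · omega
        · omega
      · refine Finset.sum_congr rfl fun i hi => ?_
        have hi' := Finset.mem_range.mp hi
        congr 2
        · omega
        · omega
    rw [hsplit, h1, h2]
    ring
end

section
/- For l ≥ 3, the value BRW(τ; M_1, ..., M_l) can be computed with exactly ⌊l/2⌋ field multiplications, given the precomputed squarings τ^2, τ^4, ..., τ^{2^{⌊lg l⌋}}. Formally, define the multiplication-count function T by T(0) = T(1) = 0, T(2) = 1, T(3) = 1, and T(l) = T(2^r − 1) + 1 + T(l − 2^r) for 2^r ≤ l < 2^{r+1} with r ≥ 2 (where 2^r is the largest power of 2 at most l); then T(l) = ⌊l/2⌋ for all l ≥ 0. -/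
/-!
Since `2^r - 1` is odd, `⌊(2^r - 1)/2⌋ + 1 = 2^(r-1)`, and since `2^r` is even,
`⌊(l - 2^r)/2⌋ = ⌊l/2⌋ - 2^(r-1)`; so `l ↦ ⌊l/2⌋` satisfies the recursion, and strong
induction on `l` identifies `T` with it.
-/

theorem Nat.div_two_eq_of_two_pow_le {l r : ℕ} (hr : 1 ≤ r) (hl : 2 ^ r ≤ l) :
    l / 2 = (2 ^ r - 1) / 2 + 1 + (l - 2 ^ r) / 2 := by
  obtain ⟨k, rfl⟩ : ∃ k, r = k + 1 := ⟨r - 1, by omega⟩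
  have hpos : 0 < 2 ^ k := Nat.two_pow_pos k
  rw [pow_succ] at hl ⊢
  omega

theorem Nat.exists_two_le_two_pow_le_lt {l : ℕ} (hl : 4 ≤ l) :
    ∃ r, 2 ≤ r ∧ 2 ^ r ≤ l ∧ l < 2 ^ (r + 1) :=
  ⟨Nat.log 2 l, Nat.le_log_of_pow_le one_lt_two hl, Nat.pow_log_le_self 2 (by omega),
    Nat.lt_pow_succ_log_self one_lt_two l⟩

/-- The multiplication count `T` for the recursive BRW evaluation, characterized by
`T(0) = T(1) = 0`, `T(2) = T(3) = 1`, and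
`T(l) = T(2^r − 1) + 1 + T(l − 2^r)` whenever `r ≥ 2` and `2^r ≤ l < 2^(r+1)`,
satisfies `T(l) = ⌊l/2⌋` for all `l ≥ 0`. -/
theorem brw_mult_count (T : ℕ → ℕ)
    (h0 : T 0 = 0) (h1 : T 1 = 0) (h2 : T 2 = 1) (h3 : T 3 = 1)
    (hrec : ∀ l r : ℕ, 2 ≤ r → 2 ^ r ≤ l → l < 2 ^ (r + 1) →
      T l = T (2 ^ r - 1) + 1 + T (l - 2 ^ r)) :
    ∀ l : ℕ, T l = l / 2 := by
  intro l
  induction l using Nat.strong_induction_on with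
  | _ l ih =>
    by_cases hl : l < 4
    · interval_cases l <;> assumption
    obtain ⟨r, hr, hle, hlt⟩ := Nat.exists_two_le_two_pow_le_lt (not_lt.mp hl)
    have hpos : 0 < 2 ^ r := Nat.two_pow_pos r
    rw [hrec l r hr hle hlt, ih (2 ^ r - 1) (by omega), ih (l - 2 ^ r) (by omega),
      Nat.div_two_eq_of_two_pow_le (by omega) hle]
end
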